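/- arXiv:1602.07729 — 5 statements merged into one kernel-verified Lean document; each statement's English description precedes it below -/
import Mathlib

section
/- Let P be a row-stochastic matrix on a finite state space V, and for each vertex v let σ_v : ℕ → N(v) be the SRT-router sequence defined inductively by: T_i(v) = {u ∈ N(v) : |{j < i : σ_v(j) = u}| − (i+1)·P_{v,u} < 0}, and σ_v(i) is the element u* ∈ T_i(v) minimizing (|{j < i : σ_v(j) = u}| + 1)/P_{v,u} (ties broken by a fixed order). Then for every u, v ∈ V and every integer z > 0, we have | |{j ∈ [0, z) : σ_v(j) = u}| − z·P_{v,u} | < 1. -/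
/-!
Write `c_w(i)` for the number of visits to `w` before step `i`. The upper bound
`c_w(i) < i p_w + 1` holds because `w` is only chosen while `c_w` is below its quota.
For the lower bound, view the router as an earliest-deadline-first schedule: the next visit to `w`
has deadline `(c_w + 1) / p_w`, and the router picks the eligible vertex with the earliest deadline.
Suppose `c_u(z) ≤ z p_u - 1` and call step `i < z` on time if the visit made at `i` has deadline
at most `z`. Step `z - 1` is on time, since `u` is eligible there with deadline at most `z`; let
`[m, z)` be the maximal window of on-time steps. A vertex `w` visited in the window had already met
its quota `m p_w` at time `m`: otherwise it would have been eligible at the late step `m - 1` with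
a deadline at most `z`. Its last visit is on time, so `w` is visited at most `(z - m) p_w` times in
the window, and `u` strictly fewer. Summing over all vertices gives `z - m < z - m`.
-/

open Finset

section HitCount

variable {V : Type*} [DecidableEq V] (s : ℕ → V) (w : V)

def hitCount (i : ℕ) : ℕ := #{j ∈ range i | s j = w}

lemma hitCount_succ (i : ℕ) :
    hitCount s w (i + 1) = hitCount s w i + if s i = w then 1 else 0 := by
  simp only [hitCount, card_filter, sum_range_succ]

lemma hitCount_mono : Monotone (hitCount s w) :=
  monotone_nat_of_le_succ fun i => by rw [hitCount_succ]; omega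

variable {s w} in
lemma exists_hitCount_eq {m z k : ℕ} (hmk : hitCount s w m ≤ k) (hkz : k < hitCount s w z) :
    ∃ j, m ≤ j ∧ j < z ∧ s j = w ∧ hitCount s w j = k := by
  induction z with
  | zero => simp [hitCount] at hkz
  | succ z ih =>
    by_cases hk : k < hitCount s w z
    · obtain ⟨j, hmj, hjz, hjw, hj⟩ := ih hk
      exact ⟨j, hmj, hjz.trans z.lt_succ_self, hjw, hj⟩
    · have hmz : m ≤ z := by
        by_contra! hzm
        have : hitCount s w (z + 1) ≤ hitCount s w m := hitCount_mono s w hzm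
        omega
      rw [hitCount_succ] at hkz
      split_ifs at hkz with hzw
      · exact ⟨z, hmz, z.lt_succ_self, hzw, by omega⟩
      · omega

lemma sum_hitCount [Fintype V] (i : ℕ) : ∑ w, hitCount s w i = i := by
  simpa [hitCount] using (card_eq_sum_card_fiberwise (f := s) (s := range i) (t := univ)
    fun j _ => mem_univ (s j)).symm

end HitCount

section Router

variable {V : Type*} [DecidableEq V] (p : V → ℝ) (s : ℕ → V)

/-- The set `T_i(v)` of the paper, for the row `p = P v` and the sequence `s = σ v`. -/
def Eligible (i : ℕ) (w : V) : Prop :=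
  0 < p w ∧ (hitCount s w i : ℝ) - (i + 1) * p w < 0

structure IsSRTRouter : Prop where
  eligible : ∀ i, Eligible p s i (s i)
  le_of_eligible : ∀ i w, Eligible p s i w →
    ((hitCount s (s i) i : ℝ) + 1) / p (s i) ≤ ((hitCount s w i : ℝ) + 1) / p w

def OnTime (z i : ℕ) : Prop :=
  (hitCount s (s i) i : ℝ) + 1 ≤ z * p (s i)

variable {p s}

theorem IsSRTRouter.hitCount_lt (h : IsSRTRouter p s) (hp : ∀ w, 0 ≤ p w) (w : V) :
    ∀ i, (hitCount s w i : ℝ) < i * p w + 1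
  | 0 => by simp [hitCount]
  | i + 1 => by
    have ih := h.hitCount_lt hp w i
    rw [hitCount_succ]
    split_ifs with hi
    · have := (h.eligible i).2
      subst hi
      push_cast
      linarith
    · have := hp w
      push_cast
      linarith

lemma IsSRTRouter.onTime_of_eligible (h : IsSRTRouter p s) {z i : ℕ} {w : V}
    (hw : Eligible p s i w) (hwz : (hitCount s w i : ℝ) + 1 ≤ z * p w) : OnTime p s z i := by
  rw [OnTime, ← div_le_iff₀ (h.eligible i).1]
  exact (h.le_of_eligible i w hw).trans ((div_le_iff₀ hw.1).2 (by linarith))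

lemma hitCount_le_of_onTime {z m : ℕ} {w : V} (hon : ∀ i, m ≤ i → i < z → OnTime p s z i)
    (hw : hitCount s w m < hitCount s w z) : (hitCount s w z : ℝ) ≤ z * p w := by
  obtain ⟨j, hmj, hjz, hjw, hj⟩ :=
    exists_hitCount_eq (s := s) (w := w) (m := m) (z := z) (k := hitCount s w z - 1) (by omega) (by omega)
  have := hon j hmj hjz
  rw [OnTime, hjw, hj, Nat.cast_sub (by omega), Nat.cast_one, sub_add_cancel] at this
  exact this

lemma IsSRTRouter.mul_le_hitCount_of_not_onTime (h : IsSRTRouter p s) {z n : ℕ} {w : V}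
    (hn : ¬ OnTime p s z n) (hon : ∀ i, n < i → i < z → OnTime p s z i)
    (hw : hitCount s w (n + 1) < hitCount s w z) : (n + 1) * p w ≤ hitCount s w (n + 1) := by
  obtain ⟨j, hnj, hjz, hjw, hj⟩ := exists_hitCount_eq le_rfl hw
  have hwz : (hitCount s w (n + 1) : ℝ) + 1 ≤ z * p w := by
    have := hon j hnj hjz
    rwa [OnTime, hjw, hj] at this
  have hpw : 0 < p w := hjw ▸ (h.eligible j).1
  have hmono : (hitCount s w n : ℝ) ≤ hitCount s w (n + 1) := by
    exact_mod_cast hitCount_mono s w n.le_succ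
  by_contra! hlt
  exact hn (h.onTime_of_eligible ⟨hpw, by linarith⟩ (by linarith))

variable [Fintype V]

lemma sub_one_lt_hitCount_of_onTime (hp0 : ∀ w, 0 ≤ p w) (hp1 : ∑ w, p w = 1) {m z : ℕ}
    (hmz : m < z) (hon : ∀ i, m ≤ i → i < z → OnTime p s z i)
    (hquota : ∀ w, hitCount s w m < hitCount s w z → m * p w ≤ hitCount s w m)
    {u : V} (hpu : 0 < p u) : z * p u - 1 < hitCount s u z := by
  by_contra! hu
  have hzm : (0 : ℝ) < z - m := sub_pos.2 (by exact_mod_cast hmz)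
  have hle : ∀ w, (hitCount s w z : ℝ) - hitCount s w m ≤ (z - m) * p w := fun w => by
    rcases (hitCount_mono s w hmz.le).lt_or_eq with hw | hw
    · linarith [hitCount_le_of_onTime hon hw, hquota w hw]
    · rw [hw, sub_self]
      exact mul_nonneg hzm.le (hp0 w)
  have hlt : (hitCount s u z : ℝ) - hitCount s u m < (z - m) * p u := by
    rcases (hitCount_mono s u hmz.le).lt_or_eq with hw | hw
    · linarith [hquota u hw]
    · rw [hw, sub_self]
      exact mul_pos hzm hpu
  have := sum_lt_sum (fun w _ => hle w) ⟨u, mem_univ u, hlt⟩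
  rw [sum_sub_distrib, ← mul_sum, hp1, ← Nat.cast_sum, ← Nat.cast_sum, sum_hitCount,
    sum_hitCount] at this
  linarith

theorem IsSRTRouter.sub_one_lt_hitCount (h : IsSRTRouter p s) (hp0 : ∀ w, 0 ≤ p w)
    (hp1 : ∑ w, p w = 1) (u : V) (z : ℕ) : z * p u - 1 < hitCount s u z := by
  classical
  by_contra! hu
  have hzpu : 1 ≤ z * p u := by linarith [(Nat.cast_nonneg _ : (0 : ℝ) ≤ hitCount s u z)]
  have hpu : 0 < p u := pos_of_mul_pos_right (one_pos.trans_le hzpu) (Nat.cast_nonneg z)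
  have hz : 0 < z := Nat.pos_of_ne_zero (by rintro rfl; norm_num at hzpu)
  have hmono : (hitCount s u (z - 1) : ℝ) ≤ hitCount s u z := by
    exact_mod_cast hitCount_mono s u (Nat.sub_le z 1)
  have hz1 : ((z - 1 : ℕ) : ℝ) + 1 = z := by rw [Nat.cast_sub hz, Nat.cast_one, sub_add_cancel]
  have hlast : OnTime p s z (z - 1) :=
    h.onTime_of_eligible ⟨hpu, by rw [hz1]; linarith⟩ (by linarith)
  have hwindow : ∃ m, ∀ i, m ≤ i → i < z → OnTime p s z i := ⟨z, fun i hi hiz => by omega⟩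
  have hon := Nat.find_spec hwindow
  have hmz : Nat.find hwindow < z :=
    (Nat.find_le (n := z - 1) fun i hi hiz => by rwa [show i = z - 1 by omega]).trans_lt (by omega)
  refine hu.not_gt (sub_one_lt_hitCount_of_onTime hp0 hp1 hmz hon (fun w hw => ?_) hpu)
  rcases hm : Nat.find hwindow with _ | n
  · simp
  · have hlate : ¬ OnTime p s z n := by
      intro hn
      refine Nat.find_min hwindow (m := n) (by omega) fun i hni hiz => ?_
      rcases hni.eq_or_lt with rfl | hi
      · exact hn
      · exact hon i (by omega) hiz
    rw [hm] at hw hon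
    exact_mod_cast h.mul_le_hitCount_of_not_onTime hlate hon hw

end Router

theorem srt_low_discrepancy_general {V : Type*} [Fintype V] [DecidableEq V]
    (P : Matrix V V ℝ)
    (hP0 : ∀ u v, 0 ≤ P u v) (hP1 : ∀ u, ∑ v, P u v = 1)
    (σ : V → ℕ → V)
    -- `σ v i` belongs to `T_i(v)` (in particular it is a neighbour of `v`)
    (hmem : ∀ v i, 0 < P v (σ v i) ∧
      (((range i).filter (fun j => σ v j = σ v i)).card : ℝ) - (i + 1 : ℝ) * P v (σ v i) < 0)
    -- `σ v i` minimizes `(|{j < i : σ_v(j) = u}| + 1) / P_{v,u}` over `u ∈ T_i(v)`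
    (hmin : ∀ v i u, 0 < P v u →
      (((range i).filter (fun j => σ v j = u)).card : ℝ) - (i + 1 : ℝ) * P v u < 0 →
      ((((range i).filter (fun j => σ v j = σ v i)).card : ℝ) + 1) / P v (σ v i) ≤
        ((((range i).filter (fun j => σ v j = u)).card : ℝ) + 1) / P v u)
    (v u : V) (z : ℕ) :
    |(((range z).filter (fun j => σ v j = u)).card : ℝ) - (z : ℝ) * P v u| < 1 := by
  have hσ : IsSRTRouter (P v) (σ v) := ⟨hmem v, fun i w hw => hmin v i w hw.1 hw.2⟩
  change |(hitCount (σ v) u z : ℝ) - z * P v u| < 1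
  rw [abs_lt]
  constructor
  · linarith [hσ.sub_one_lt_hitCount (hP0 v) (hP1 v) u z]
  · linarith [hσ.hitCount_lt (hP0 v) u z]

/-- Proposition 1 (low-discrepancy property of the SRT-router sequence):
for any row-stochastic `P` and any greedy SRT-router sequence `σ`,
`| |{j < z : σ_v(j) = u}| - z·P_{v,u} | < 1` for all `u, v` and `z > 0`. -/
theorem srt_low_discrepancy {V : Type*} [Fintype V] [DecidableEq V]
    (P : Matrix V V ℝ)
    (hP0 : ∀ u v, 0 ≤ P u v) (hP1 : ∀ u, ∑ v, P u v = 1)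
    (σ : V → ℕ → V)
    -- `σ v i` belongs to `T_i(v)` (in particular it is a neighbour of `v`)
    (hmem : ∀ v i, 0 < P v (σ v i) ∧
      (((range i).filter (fun j => σ v j = σ v i)).card : ℝ) - (i + 1 : ℝ) * P v (σ v i) < 0)
    -- `σ v i` minimizes `(|{j < i : σ_v(j) = u}| + 1) / P_{v,u}` over `u ∈ T_i(v)`
    (hmin : ∀ v i u, 0 < P v u →
      (((range i).filter (fun j => σ v j = u)).card : ℝ) - (i + 1 : ℝ) * P v u < 0 →
      ((((range i).filter (fun j => σ v j = σ v i)).card : ℝ) + 1) / P v (σ v i) ≤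
        ((((range i).filter (fun j => σ v j = u)).card : ℝ) + 1) / P v u)
    (v u : V) (z : ℕ) (hz : 0 < z) :
    |(((range z).filter (fun j => σ v j = u)).card : ℝ) - (z : ℝ) * P v u| < 1 :=
  srt_low_discrepancy_general P hP0 hP1 σ hmem hmin v u z
end

section
/- Let χ^{(t)} be the SRT-router model token configuration and μ^{(t)} = μ^{(0)} P^t the expected configuration of the corresponding random walk, with χ^{(0)} = μ^{(0)}. Then for any vertex w and any T > 0, χ_w^{(T)} − μ_w^{(T)} = Σ_{t=0}^{T−1} Σ_{u ∈ V} Σ_{v ∈ N(u)} (Z_{v,u}^{(t)} − χ_v^{(t)} P_{v,u}) (P^{T−t−1}_{u,w} − π_w). -/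
open Finset

/-- Single-step discrepancy identity (Lemma 4.1 of SYKY13):
`χ_w^{(T)} − μ_w^{(T)} = Σ_{t=0}^{T−1} Σ_u Σ_{v∈N(u)} (Z_{v,u}^{(t)} − χ_v^{(t)}P_{v,u})(P^{T−t−1}_{u,w} − π_w)`. -/
theorem srt_single_step_discrepancy {V : Type*} [Fintype V] [DecidableEq V]
    (P : Matrix V V ℝ) (π : V → ℝ)
    (hP0 : ∀ u v, 0 ≤ P u v) (hP1 : ∀ u, ∑ v, P u v = 1)
    -- ergodicity (primitivity)
    (herg : ∃ t0 : ℕ, ∀ u v, 0 < (P ^ t0) u v)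
    (hπ0 : ∀ v, 0 ≤ π v) (hπ1 : ∑ v, π v = 1)
    (hstat : ∀ v, ∑ u, π u * P u v = π v)
    (χ : ℕ → V → ℕ) (Z : ℕ → V → V → ℕ)
    (hZsupp : ∀ t v u, P v u = 0 → Z t v u = 0)
    (hcons : ∀ t v, ∑ u, Z t v u = χ t v)
    (hrec : ∀ t u, χ (t + 1) u = ∑ v, Z t v u)
    (μ : ℕ → V → ℝ) (hμ0 : ∀ v, μ 0 v = χ 0 v)
    (hμ : ∀ t w, μ t w = ∑ u, μ 0 u * (P ^ t) u w)
    (w : V) (T : ℕ) (hT : 0 < T) :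
    (χ T w : ℝ) - μ T w =
      ∑ t ∈ range T, ∑ u, ∑ v ∈ univ.filter (fun v => 0 < P v u),
        ((Z t v u : ℝ) - (χ t v : ℝ) * P v u) * ((P ^ (T - t - 1)) u w - π w) := by
  -- replace the filtered inner sums by sums over all of V
  have hfull : ∀ t u, ∑ v ∈ univ.filter (fun v => 0 < P v u),
      ((Z t v u : ℝ) - (χ t v : ℝ) * P v u) * ((P ^ (T - t - 1)) u w - π w)
      = ∑ v, ((Z t v u : ℝ) - (χ t v : ℝ) * P v u) * ((P ^ (T - t - 1)) u w - π w) := by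
    intro t u
    refine Finset.sum_subset (Finset.filter_subset _ _) fun v _ hv => ?_
    simp only [Finset.mem_filter, Finset.mem_univ, true_and, not_lt] at hv
    have hz : P v u = 0 := le_antisymm hv (hP0 v u)
    rw [hz, hZsupp t v u hz]
    simp
  -- mass conservation: the total discrepancy at each step is 0
  have hzero : ∀ t, ∑ u, ∑ v, ((Z t v u : ℝ) - (χ t v : ℝ) * P v u) = 0 := by
    intro t
    rw [Finset.sum_comm]
    have h : ∀ v, ∑ u, ((Z t v u : ℝ) - (χ t v : ℝ) * P v u) = 0 := by
      intro v
      rw [Finset.sum_sub_distrib, ← Finset.mul_sum, hP1, ← Nat.cast_sum, hcons]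
      ring
    simp [h]
  -- the key single-step identity
  have hmain : ∀ t ∈ range T,
      (∑ u, ∑ v, ((Z t v u : ℝ) - (χ t v : ℝ) * P v u) * ((P ^ (T - t - 1)) u w - π w))
      = (∑ u, (χ (t+1) u : ℝ) * (P ^ (T - (t+1))) u w)
        - ∑ u, (χ t u : ℝ) * (P ^ (T - t)) u w := by
    intro t ht
    simp only [Finset.mem_range] at ht
    have h1 : T - t - 1 = T - (t+1) := by omega
    have h2 : T - t = (T - (t+1)) + 1 := by omega
    have expand : ∀ u v : V, ((Z t v u : ℝ) - (χ t v : ℝ) * P v u) * ((P ^ (T - t - 1)) u w - π w)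
        = ((Z t v u : ℝ) - (χ t v : ℝ) * P v u) * (P ^ (T - t - 1)) u w
          - ((Z t v u : ℝ) - (χ t v : ℝ) * P v u) * π w := by intro u v; ring
    simp only [expand, Finset.sum_sub_distrib]
    have hpi : ∑ u, ∑ v, ((Z t v u : ℝ) - (χ t v : ℝ) * P v u) * π w = 0 := by
      simp only [← Finset.sum_mul]
      rw [hzero t, zero_mul]
    rw [hpi, sub_zero]
    simp only [sub_mul, Finset.sum_sub_distrib, h1]
    congr 1
    · refine Finset.sum_congr rfl fun u _ => ?_
      rw [hrec t u, Nat.cast_sum, Finset.sum_mul]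
    · rw [Finset.sum_comm]
      refine Finset.sum_congr rfl fun v _ => ?_
      rw [h2, pow_succ', Matrix.mul_apply, Finset.mul_sum]
      exact Finset.sum_congr rfl fun u _ => by ring
  calc (χ T w : ℝ) - μ T w
      = (∑ u, (χ T u : ℝ) * (P ^ (T - T)) u w)
        - ∑ u, (χ 0 u : ℝ) * (P ^ (T - 0)) u w := by
        congr 1
        · simp [Matrix.one_apply]
        · rw [hμ T w]
          exact Finset.sum_congr rfl fun u _ => by rw [hμ0 u]; norm_num
    _ = ∑ t ∈ range T, ((∑ u, (χ (t+1) u : ℝ) * (P ^ (T - (t+1))) u w)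
        - ∑ u, (χ t u : ℝ) * (P ^ (T - t)) u w) := by
        rw [Finset.sum_range_sub (fun t => ∑ u, (χ t u : ℝ) * (P ^ (T - t)) u w)]
    _ = _ := by
        refine Finset.sum_congr rfl fun t ht => ?_
        rw [← hmain t ht]
        exact Finset.sum_congr rfl fun u _ => (hfull t u).symm
end

section
/- Let P be an ergodic transition matrix on a finite state space with stationary distribution π and mixing time τ(γ) = max_u min{t : D_tv(P^t_{u,·}, π) ≤ γ}. Then for any state v, any T > 0, and any γ with 0 < γ < 1/2: Σ_{t=0}^{T−1} D_tv(P^t_{v,·}, π) ≤ ((1−γ)/(1−2γ)) · τ(γ). -/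
open Finset Matrix

/-!
Write `d t` for the total variation distance from row `v` of `P ^ t` to `π`. Every row of `P ^ τ`
is `γ`-close to `π`. A deviation `(P ^ t) v - π` sums to zero, so multiplying it by `P ^ τ` is the
same as multiplying it by the matrix with rows `(P ^ τ) w - π`, of `ℓ¹` norm at most `2γ`; hence
`d (t + τ) ≤ 2γ d t`, and `d` is nonincreasing. So the first `τ` terms of the sum contribute at most
`τ`, and the remaining ones a sum `S` with `S ≤ τγ + 2γS`. Ergodicity is needed only to make the
infima defining `τ` range over nonempty sets, which follows from Doeblin's contraction argument.
-/

theorem sum_range_le_add_sum_range_shift {b : ℕ → ℝ} (hb : ∀ t, 0 ≤ b t) (τ N : ℕ) :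
    ∑ t ∈ range N, b t ≤ ∑ t ∈ range τ, b t + ∑ t ∈ range N, b (τ + t) := by
  rw [← sum_range_add]
  exact sum_le_sum_of_subset_of_nonneg (range_subset_range.2 (Nat.le_add_left N τ))
    fun t _ _ => hb t

/-- The first `τ` terms cost at most `τ M`, the remaining ones at most `c` times the whole sum. -/
theorem sum_range_le_div_of_shift_le_mul {b : ℕ → ℝ} {τ : ℕ} {M c : ℝ} (hb : ∀ t, 0 ≤ b t)
    (hM : ∀ t, b t ≤ M) (hc : ∀ t, b (τ + t) ≤ c * b t) (hc1 : c < 1) (N : ℕ) :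
    ∑ t ∈ range N, b t ≤ τ * M / (1 - c) := by
  have hself : ∑ t ∈ range N, b t ≤ τ * M + c * ∑ t ∈ range N, b t :=
    calc ∑ t ∈ range N, b t ≤ ∑ t ∈ range τ, b t + ∑ t ∈ range N, b (τ + t) :=
          sum_range_le_add_sum_range_shift hb τ N
      _ ≤ τ * M + ∑ t ∈ range N, c * b t := by
          gcongr with t
          · simpa using sum_le_card_nsmul (range τ) b M fun t _ => hM t
          · exact hc t
      _ = τ * M + c * ∑ t ∈ range N, b t := by rw [mul_sum]
  rw [le_div_iff₀ (by linarith)]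
  linarith

noncomputable def tvDist {V : Type*} [Fintype V] (ξ ζ : V → ℝ) : ℝ :=
  (1 / 2) * ∑ v, |ξ v - ζ v|

section TotalVariation

variable {V : Type*} [Fintype V]

theorem tvDist_nonneg (ξ ζ : V → ℝ) : 0 ≤ tvDist ξ ζ := by
  unfold tvDist
  positivity

theorem tvDist_le_one {ξ ζ : V → ℝ} (hξ0 : ∀ v, 0 ≤ ξ v) (hξ1 : ∑ v, ξ v = 1)
    (hζ0 : ∀ v, 0 ≤ ζ v) (hζ1 : ∑ v, ζ v = 1) : tvDist ξ ζ ≤ 1 := by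
  have h : ∑ v, |ξ v - ζ v| ≤ ∑ v, (ξ v + ζ v) := sum_le_sum fun v _ =>
    (abs_sub _ _).trans_eq (by rw [abs_of_nonneg (hξ0 v), abs_of_nonneg (hζ0 v)])
  rw [sum_add_distrib, hξ1, hζ1] at h
  unfold tvDist
  linarith

/-- Since `e` sums to zero, subtracting `m` from every row of `Q` does not change `e ᵥ* Q`. -/
theorem sum_abs_vecMul_le {e : V → ℝ} (he : ∑ w, e w = 0) (Q : Matrix V V ℝ) (m : V → ℝ) :
    ∑ x, |(e ᵥ* Q) x| ≤ ∑ w, |e w| * ∑ x, |Q w x - m x| := by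
  have hshift : ∀ x, (e ᵥ* Q) x = ∑ w, e w * (Q w x - m x) := fun x => by
    simp only [mul_sub, sum_sub_distrib, ← sum_mul, he, zero_mul, sub_zero]
    rfl
  calc ∑ x, |(e ᵥ* Q) x| ≤ ∑ x, ∑ w, |e w| * |Q w x - m x| := sum_le_sum fun x _ => by
        rw [hshift]
        exact (abs_sum_le_sum_abs _ _).trans_eq (by simp only [abs_mul])
    _ = ∑ w, |e w| * ∑ x, |Q w x - m x| := by
        rw [sum_comm]
        simp only [mul_sum]

end TotalVariation

section MarkovChain

variable {V : Type*} [Fintype V] [DecidableEq V] {P : Matrix V V ℝ} {π : V → ℝ}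

noncomputable def mixingTime (P : Matrix V V ℝ) (π : V → ℝ) (γ : ℝ) : ℕ :=
  univ.sup fun u => sInf {t : ℕ | tvDist ((P ^ t) u) π ≤ γ}

theorem vecMul_pow_eq_self (hπ : π ᵥ* P = π) (t : ℕ) : π ᵥ* P ^ t = π := by
  induction t with
  | zero => exact vecMul_one π
  | succ t ih => rw [pow_succ, ← vecMul_vecMul, ih, hπ]

theorem pow_add_apply_sub (hπ : π ᵥ* P = π) (t s : ℕ) (u : V) :
    (P ^ (t + s)) u - π = ((P ^ t) u - π) ᵥ* P ^ s := by
  rw [pow_add, mul_apply_eq_vecMul, sub_vecMul, vecMul_pow_eq_self hπ]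

theorem tvDist_pow_apply_le_one (hP : P ∈ rowStochastic ℝ V) (hπ0 : ∀ v, 0 ≤ π v)
    (hπ1 : ∑ v, π v = 1) (t : ℕ) (u : V) : tvDist ((P ^ t) u) π ≤ 1 :=
  tvDist_le_one (fun _ => nonneg_of_mem_rowStochastic (pow_mem hP t))
    (sum_row_of_mem_rowStochastic (pow_mem hP t) u) hπ0 hπ1

variable (hP : P ∈ rowStochastic ℝ V) (hπ : π ᵥ* P = π) (hπ1 : ∑ v, π v = 1)
include hP hπ hπ1

/-- Taking `m = 0`, `m = π` or a constant minorant of `P ^ s` gives, respectively, monotonicity,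
submultiplicativity and Doeblin's contraction. -/
theorem tvDist_pow_add_le {s : ℕ} {m : V → ℝ} {B : ℝ} (hB : ∀ w, ∑ x, |(P ^ s) w x - m x| ≤ B)
    (t : ℕ) (u : V) : tvDist ((P ^ (t + s)) u) π ≤ B * tvDist ((P ^ t) u) π := by
  have he : ∑ w, ((P ^ t) u - π) w = 0 := by
    simp only [Pi.sub_apply, sum_sub_distrib, sum_row_of_mem_rowStochastic (pow_mem hP t), hπ1,
      sub_self]
  have key := sum_abs_vecMul_le he (P ^ s) m
  rw [← pow_add_apply_sub hπ] at key
  unfold tvDist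
  calc 1 / 2 * ∑ x, |(P ^ (t + s)) u x - π x|
      ≤ 1 / 2 * ∑ w, |(P ^ t) u w - π w| * B := by
        refine mul_le_mul_of_nonneg_left (key.trans (sum_le_sum fun w _ => ?_)) (by norm_num)
        exact mul_le_mul_of_nonneg_left (hB w) (abs_nonneg _)
    _ = B * (1 / 2 * ∑ w, |(P ^ t) u w - π w|) := by rw [← sum_mul]; ring

theorem tvDist_pow_add_le_self (t s : ℕ) (u : V) :
    tvDist ((P ^ (t + s)) u) π ≤ tvDist ((P ^ t) u) π := by
  have hB : ∀ w, ∑ x, |(P ^ s) w x - 0| ≤ 1 := fun w => by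
    simp only [sub_zero, abs_of_nonneg (nonneg_of_mem_rowStochastic (pow_mem hP s)),
      sum_row_of_mem_rowStochastic (pow_mem hP s), le_refl]
  simpa using tvDist_pow_add_le hP hπ hπ1 hB t u

theorem tvDist_pow_add_le_two_mul {s : ℕ} {ε : ℝ} (hε : ∀ w, tvDist ((P ^ s) w) π ≤ ε)
    (t : ℕ) (u : V) : tvDist ((P ^ (t + s)) u) π ≤ 2 * ε * tvDist ((P ^ t) u) π := by
  refine tvDist_pow_add_le hP hπ hπ1 (m := π) (fun w => ?_) t u
  have := hε w
  unfold tvDist at this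
  linarith

/-- Doeblin: if every entry of `P ^ t₀` is at least `δ > 0`, the contraction factor is
`1 - |V| δ`. -/
theorem exists_tvDist_pow_add_le_mul_of_pos [Nonempty V] {t₀ : ℕ}
    (hpos : ∀ u v, 0 < (P ^ t₀) u v) : ∃ c, 0 ≤ c ∧ c < 1 ∧
      ∀ t u, tvDist ((P ^ (t + t₀)) u) π ≤ c * tvDist ((P ^ t) u) π := by
  obtain ⟨p, hp⟩ := Finite.exists_min fun q : V × V => (P ^ t₀) q.1 q.2
  set δ := (P ^ t₀) p.1 p.2
  have hrow : ∀ w, ∑ x, |(P ^ t₀) w x - δ| = 1 - Fintype.card V * δ := fun w => by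
    simp only [abs_of_nonneg (sub_nonneg.2 (hp (w, _))), sum_sub_distrib,
      sum_row_of_mem_rowStochastic (pow_mem hP t₀), sum_const, card_univ, nsmul_eq_mul]
  refine ⟨1 - Fintype.card V * δ, ?_, ?_, tvDist_pow_add_le hP hπ hπ1 (m := fun _ => δ)
    (fun w => (hrow w).le)⟩
  · rw [← hrow (Classical.arbitrary V)]
    positivity
  · have : 0 < Fintype.card V * δ := mul_pos (by exact_mod_cast Fintype.card_pos) (hpos _ _)
    linarith

theorem exists_tvDist_pow_le [Nonempty V] (hπ0 : ∀ v, 0 ≤ π v) {t₀ : ℕ}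
    (hpos : ∀ u v, 0 < (P ^ t₀) u v) {ε : ℝ} (hε : 0 < ε) :
    ∃ t, ∀ u, tvDist ((P ^ t) u) π ≤ ε := by
  obtain ⟨c, hc0, hc1, hc⟩ := exists_tvDist_pow_add_le_mul_of_pos hP hπ hπ1 hpos
  have hdecay : ∀ k u, tvDist ((P ^ (k * t₀)) u) π ≤ c ^ k := by
    intro k u
    induction k with
    | zero =>
      simpa using tvDist_pow_apply_le_one hP hπ0 hπ1 0 u
    | succ k ih =>
      calc tvDist ((P ^ ((k + 1) * t₀)) u) π ≤ c * tvDist ((P ^ (k * t₀)) u) π := by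
            rw [add_one_mul]
            exact hc _ u
        _ ≤ c ^ (k + 1) := by rw [pow_succ']; gcongr
  obtain ⟨k, hk⟩ := exists_pow_lt_of_lt_one hε hc1
  exact ⟨k * t₀, fun u => (hdecay k u).trans hk.le⟩

theorem tvDist_pow_mixingTime_le {γ : ℝ} (hex : ∃ t, ∀ u, tvDist ((P ^ t) u) π ≤ γ) (u : V) :
    tvDist ((P ^ mixingTime P π γ) u) π ≤ γ := by
  obtain ⟨t, ht⟩ := hex
  have hmem := Nat.sInf_mem (s := {t : ℕ | tvDist ((P ^ t) u) π ≤ γ}) ⟨t, ht u⟩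
  have hle : sInf {t : ℕ | tvDist ((P ^ t) u) π ≤ γ} ≤ mixingTime P π γ :=
    le_sup (f := fun u => sInf {t : ℕ | tvDist ((P ^ t) u) π ≤ γ}) (mem_univ u)
  rw [← Nat.add_sub_cancel' hle]
  exact (tvDist_pow_add_le_self hP hπ hπ1 _ _ u).trans hmem

end MarkovChain

theorem dtv_sum_le_mixing_general {V : Type*} [Fintype V] [DecidableEq V] [Nonempty V]
    (P : Matrix V V ℝ) (π : V → ℝ)
    (hP0 : ∀ u v, 0 ≤ P u v) (hP1 : ∀ u, ∑ v, P u v = 1)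
    (herg : ∃ t0 : ℕ, ∀ u v, 0 < (P ^ t0) u v)
    (hπ0 : ∀ v, 0 ≤ π v) (hπ1 : ∑ v, π v = 1)
    (hstat : ∀ v, ∑ u, π u * P u v = π v)
    (Dtv : (V → ℝ) → (V → ℝ) → ℝ)
    (hD : ∀ ξ ζ, Dtv ξ ζ = (1 / 2) * ∑ v, |ξ v - ζ v|)
    (γ : ℝ) (hγ : 0 < γ) (hγ2 : γ < 1 / 2)
    (τ : ℕ)
    (hτ : τ = univ.sup fun u => sInf {t : ℕ | Dtv (fun v => (P ^ t) u v) π ≤ γ})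
    (v : V) (T : ℕ) :
    ∑ t ∈ range T, Dtv (fun w => (P ^ t) v w) π ≤ ((1 - γ) / (1 - 2 * γ)) * τ := by
  obtain rfl : Dtv = tvDist := funext₂ hD
  obtain rfl : τ = mixingTime P π γ := hτ
  have hP : P ∈ rowStochastic ℝ V := mem_rowStochastic_iff_sum.2 ⟨hP0, hP1⟩
  have hπ : π ᵥ* P = π := funext hstat
  obtain ⟨t₀, hpos⟩ := herg
  have hmix := tvDist_pow_mixingTime_le hP hπ hπ1 (exists_tvDist_pow_le hP hπ hπ1 hπ0 hpos hγ)
  set τ := mixingTime P π γ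
  set a : ℕ → ℝ := fun t => tvDist ((P ^ t) v) π
  have ha0 : ∀ t, 0 ≤ a t := fun t => tvDist_nonneg _ _
  have hhead : ∑ t ∈ range τ, a t ≤ τ := by
    simpa using sum_le_card_nsmul (range τ) a 1 fun t _ => tvDist_pow_apply_le_one hP hπ0 hπ1 t v
  have htail : ∑ t ∈ range T, a (τ + t) ≤ τ * γ / (1 - 2 * γ) :=
    sum_range_le_div_of_shift_le_mul (fun t => ha0 _)
      (fun t => (tvDist_pow_add_le_self hP hπ hπ1 τ t v).trans (hmix v))
      (fun t => by simpa only [← add_assoc, add_comm τ t]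
        using tvDist_pow_add_le_two_mul hP hπ hπ1 hmix (τ + t) v) (by linarith) T
  calc ∑ t ∈ range T, a t ≤ ∑ t ∈ range τ, a t + ∑ t ∈ range T, a (τ + t) :=
        sum_range_le_add_sum_range_shift ha0 τ T
    _ ≤ τ + τ * γ / (1 - 2 * γ) := add_le_add hhead htail
    _ = (1 - γ) / (1 - 2 * γ) * τ := by
        have : 1 - 2 * γ ≠ 0 := by linarith
        rw [div_mul_eq_mul_div, add_div' _ _ _ this]
        ring

/-- Lemma (SYKY13, Lemma 4.2): for an ergodic `P` with stationary distribution `π`,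
`Σ_{t=0}^{T−1} D_tv(P^t_{v,·}, π) ≤ ((1−γ)/(1−2γ)) τ(γ)` for any `0 < γ < 1/2`. -/
theorem dtv_sum_le_mixing {V : Type*} [Fintype V] [DecidableEq V] [Nonempty V]
    (P : Matrix V V ℝ) (π : V → ℝ)
    (hP0 : ∀ u v, 0 ≤ P u v) (hP1 : ∀ u, ∑ v, P u v = 1)
    (herg : ∃ t0 : ℕ, ∀ u v, 0 < (P ^ t0) u v)
    (hπ0 : ∀ v, 0 ≤ π v) (hπ1 : ∑ v, π v = 1)
    (hstat : ∀ v, ∑ u, π u * P u v = π v)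
    (Dtv : (V → ℝ) → (V → ℝ) → ℝ)
    (hD : ∀ ξ ζ, Dtv ξ ζ = (1 / 2) * ∑ v, |ξ v - ζ v|)
    (γ : ℝ) (hγ : 0 < γ) (hγ2 : γ < 1 / 2)
    (τ : ℕ)
    (hτ : τ = univ.sup fun u => sInf {t : ℕ | Dtv (fun v => (P ^ t) u v) π ≤ γ})
    (v : V) (T : ℕ) (hT : 0 < T) :
    ∑ t ∈ range T, Dtv (fun w => (P ^ t) v w) π ≤ ((1 - γ) / (1 - 2 * γ)) * τ :=
  dtv_sum_le_mixing_general P π hP0 hP1 herg hπ0 hπ1 hstat Dtv hD γ hγ hγ2 τ hτ v T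
end

section
/- Let P be reversible with respect to π. Then for every t ≥ 0, the separation distance satisfies s(2t) ≤ 1 − (1 − d̄(t))², where s(t) = max_{u,v}(1 − P^t_{u,v}/π_v) and d̄(t) = max_{u,v} D_tv(P^t_{u,·}, P^t_{v,·}). -/
open Finset

private lemma pow_nonneg' {V : Type*} [Fintype V] [DecidableEq V] (P : Matrix V V ℝ)
    (hP0 : ∀ u v, 0 ≤ P u v) : ∀ (t : ℕ) (u v : V), 0 ≤ (P ^ t) u v := by
  intro t
  induction t with
  | zero => intro u v; simp [Matrix.one_apply]; positivity
  | succ n ih =>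
    intro u v
    rw [pow_succ, Matrix.mul_apply]
    exact Finset.sum_nonneg fun w _ => mul_nonneg (ih u w) (hP0 w v)

private lemma pow_rowsum {V : Type*} [Fintype V] [DecidableEq V] (P : Matrix V V ℝ)
    (hP1 : ∀ u, ∑ v, P u v = 1) : ∀ (t : ℕ) (u : V), ∑ v, (P ^ t) u v = 1 := by
  intro t
  induction t with
  | zero => intro u; simp [Matrix.one_apply]
  | succ n ih =>
    intro u
    simp only [pow_succ, Matrix.mul_apply]
    rw [Finset.sum_comm]
    simp_rw [← Finset.mul_sum, hP1, mul_one]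
    exact ih u

private lemma pow_rev {V : Type*} [Fintype V] [DecidableEq V] (P : Matrix V V ℝ) (π : V → ℝ)
    (hrev : ∀ u v, π u * P u v = π v * P v u) :
    ∀ (t : ℕ) (u v : V), π u * (P ^ t) u v = π v * (P ^ t) v u := by
  intro t
  induction t with
  | zero =>
    intro u v
    by_cases h : u = v
    · subst h; rfl
    · simp [pow_zero, Matrix.one_apply, h, Ne.symm h]
  | succ n ih =>
    intro u v
    rw [pow_succ, Matrix.mul_apply, Finset.mul_sum]
    have : ∀ w, π u * ((P ^ n) u w * P w v) = π v * (P v w * (P ^ n) w u) := by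
      intro w
      calc π u * ((P ^ n) u w * P w v) = (π u * (P ^ n) u w) * P w v := by ring
        _ = (π w * (P ^ n) w u) * P w v := by rw [ih]
        _ = (π w * P w v) * (P ^ n) w u := by ring
        _ = (π v * P v w) * (P ^ n) w u := by rw [hrev]
        _ = π v * (P v w * (P ^ n) w u) := by ring
    rw [Finset.sum_congr rfl fun w _ => this w, ← Finset.mul_sum]
    congr 1
    rw [← pow_succ, pow_succ', Matrix.mul_apply]

/-- Lemma (LPW08, Lemma 19.3): for `P` reversible w.r.t. `π`,
`s(2t) ≤ 1 − (1 − d̄(t))²`, where `s` is the separation distance and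
`d̄(t) = max_{u,v} D_tv(P^t_{u,·}, P^t_{v,·})`. -/
theorem separation_le_one_sub_sq {V : Type*} [Fintype V] [DecidableEq V] [Nonempty V]
    (P : Matrix V V ℝ) (π : V → ℝ)
    (hP0 : ∀ u v, 0 ≤ P u v) (hP1 : ∀ u, ∑ v, P u v = 1)
    (hπpos : ∀ v, 0 < π v) (hπ1 : ∑ v, π v = 1)
    (hrev : ∀ u v, π u * P u v = π v * P v u)
    (t : ℕ) :
    univ.sup' univ_nonempty (fun p : V × V => 1 - (P ^ (2 * t)) p.1 p.2 / π p.2) ≤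
      1 - (1 - univ.sup' univ_nonempty
            (fun p : V × V => (1 / 2) * ∑ v, |(P ^ t) p.1 v - (P ^ t) p.2 v|)) ^ 2 := by
  set Q := P ^ t with hQ
  have hQ0 : ∀ u v, 0 ≤ Q u v := pow_nonneg' P hP0 t
  have hQ1 : ∀ u, ∑ v, Q u v = 1 := pow_rowsum P hP1 t
  have hQrev : ∀ u v, π u * Q u v = π v * Q v u := pow_rev P π hrev t
  set d := univ.sup' univ_nonempty
      (fun p : V × V => (1 / 2) * ∑ v, |Q p.1 v - Q p.2 v|) with hd
  -- d ≤ 1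
  have hd1 : d ≤ 1 := by
    apply Finset.sup'_le
    intro p _
    have : ∑ v, |Q p.1 v - Q p.2 v| ≤ ∑ v, (Q p.1 v + Q p.2 v) := by
      apply Finset.sum_le_sum
      intro v _
      exact (abs_sub _ _).trans (by rw [abs_of_nonneg (hQ0 _ _), abs_of_nonneg (hQ0 _ _)])
    rw [Finset.sum_add_distrib, hQ1, hQ1] at this
    linarith
  apply Finset.sup'_le
  rintro ⟨u, v⟩ _
  simp only
  -- key: (1 - d)^2 ≤ P^{2t} u v / π v
  have hmin : ∀ w, min (Q u w) (Q v w) = (Q u w + Q v w - |Q u w - Q v w|) / 2 := by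
    intro w
    rcases le_total (Q u w) (Q v w) with h | h
    · rw [min_eq_left h, abs_of_nonpos (by linarith)]; ring
    · rw [min_eq_right h, abs_of_nonneg (by linarith)]; ring
  have hsummin : ∑ w, min (Q u w) (Q v w) =
      1 - (1 / 2) * ∑ w, |Q u w - Q v w| := by
    simp_rw [hmin]
    rw [← Finset.sum_div, Finset.sum_sub_distrib, Finset.sum_add_distrib, hQ1, hQ1]
    ring
  have hdle : (1 / 2 : ℝ) * ∑ w, |Q u w - Q v w| ≤ d :=
    Finset.le_sup' (f := fun p : V × V => (1 / 2) * ∑ w, |Q p.1 w - Q p.2 w|)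
      (b := (u, v)) (Finset.mem_univ _)
  have h2 : 1 - d ≤ ∑ w, min (Q u w) (Q v w) := by rw [hsummin]; linarith
  have h4 : (1 - d) ^ 2 ≤ (∑ w, min (Q u w) (Q v w)) ^ 2 :=
    pow_le_pow_left₀ (by linarith) h2 2
  have h5 : (∑ w, min (Q u w) (Q v w)) ^ 2 ≤ ∑ w, (min (Q u w) (Q v w)) ^ 2 / π w := by
    have := Finset.sq_sum_div_le_sum_sq_div Finset.univ
      (fun w => min (Q u w) (Q v w)) (g := π) (fun w _ => hπpos w)
    rwa [hπ1, div_one] at this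
  have h6 : ∑ w, (min (Q u w) (Q v w)) ^ 2 / π w ≤ ∑ w, Q u w * Q v w / π w := by
    apply Finset.sum_le_sum
    intro w _
    have hnum : (min (Q u w) (Q v w)) ^ 2 ≤ Q u w * Q v w := by
      rw [sq]
      exact mul_le_mul (min_le_left _ _) (min_le_right _ _)
        (le_min (hQ0 _ _) (hQ0 _ _)) (hQ0 _ _)
    exact (div_le_div_iff_of_pos_right (hπpos w)).mpr hnum
  have h7 : ∑ w, Q u w * Q v w / π w = (P ^ (2 * t)) u v / π v := by
    rw [show (2 * t) = t + t by ring, pow_add, ← hQ, Matrix.mul_apply, Finset.sum_div]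
    apply Finset.sum_congr rfl
    intro w _
    rw [div_eq_div_iff (hπpos w).ne' (hπpos v).ne']
    linear_combination Q u w * hQrev v w
  linarith [h4, h5, h6, h7.le, h7.ge]
end

section
/- Suppose P is ergodic and reversible with stationary distribution π and mixing time t*. For the SRT-router model with k ≥ 1 tokens and any initial configuration, the cover time satisfies T_cover ≤ 2t* + 1 + (12 max_{u∈V}(δ(u)/π_u) · t*)/k, where T_cover = min{T ≥ 0 : X_v^{(T)} ≥ 1 for all v ∈ V}. -/
open Finset

section aux
variable {V : Type*} [Fintype V] [DecidableEq V]

lemma srt_pow_nonneg (P : Matrix V V ℝ) (hP0 : ∀ u v, 0 ≤ P u v) :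
    ∀ (t : ℕ) (u v : V), 0 ≤ (P ^ t) u v := by
  intro t
  induction t with
  | zero => intro u v; rw [pow_zero, Matrix.one_apply]; split <;> norm_num
  | succ n ih =>
      intro u v
      rw [pow_succ, Matrix.mul_apply]
      exact Finset.sum_nonneg fun x _ => mul_nonneg (ih u x) (hP0 x v)

lemma srt_pow_rowsum (P : Matrix V V ℝ) (hP1 : ∀ u, ∑ v, P u v = 1) :
    ∀ (t : ℕ) (u : V), ∑ v, (P ^ t) u v = 1 := by
  intro t
  induction t with
  | zero => intro u; simp [Matrix.one_apply]
  | succ n ih =>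
      intro u
      simp only [pow_succ, Matrix.mul_apply]
      rw [Finset.sum_comm]
      calc ∑ x, ∑ v, (P ^ n) u x * P x v = ∑ x, (P ^ n) u x * ∑ v, P x v := by
            simp [Finset.mul_sum]
        _ = 1 := by simp [hP1, ih]

lemma srt_pow_stat (P : Matrix V V ℝ) (π : V → ℝ) (hstat : ∀ v, ∑ u, π u * P u v = π v) :
    ∀ (t : ℕ) (v : V), ∑ u, π u * (P ^ t) u v = π v := by
  intro t
  induction t with
  | zero => intro v; simp [Matrix.one_apply]
  | succ n ih =>
      intro v
      simp only [pow_succ, Matrix.mul_apply, Finset.mul_sum]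
      rw [Finset.sum_comm]
      calc ∑ x, ∑ u, π u * ((P ^ n) u x * P x v)
          = ∑ x, (∑ u, π u * (P ^ n) u x) * P x v := by
            congr 1; ext x; rw [Finset.sum_mul]; congr 1; ext u; ring
        _ = π v := by simp only [ih]; exact hstat v

lemma srt_pow_rev (P : Matrix V V ℝ) (π : V → ℝ)
    (hrev : ∀ u v, π u * P u v = π v * P v u) :
    ∀ (t : ℕ) (u v : V), π u * (P ^ t) u v = π v * (P ^ t) v u := by
  intro t
  induction t with
  | zero =>
      intro u v
      rcases eq_or_ne u v with rfl | h
      · rfl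
      · simp [Matrix.one_apply, h, h.symm]
  | succ n ih =>
      intro u v
      calc π u * (P ^ (n+1)) u v = π u * (P ^ n * P) u v := by rw [pow_succ]
        _ = ∑ x, π u * ((P ^ n) u x * P x v) := by
            rw [Matrix.mul_apply, Finset.mul_sum]
        _ = ∑ x, π v * (P v x * (P ^ n) x u) := by
            apply Finset.sum_congr rfl; intro x _
            calc π u * ((P ^ n) u x * P x v) = (π u * (P ^ n) u x) * P x v := by ring
              _ = (π x * (P ^ n) x u) * P x v := by rw [ih]
              _ = (π x * P x v) * (P ^ n) x u := by ring
              _ = (π v * P v x) * (P ^ n) x u := by rw [hrev]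
              _ = π v * (P v x * (P ^ n) x u) := by ring
        _ = π v * (P * P ^ n) v u := by rw [Matrix.mul_apply, Finset.mul_sum]
        _ = π v * (P ^ (n+1)) v u := by rw [← pow_succ']

/-- Contraction lemma: if all pairs of rows of a nonneg matrix `Q` are within `2β` in
`ℓ¹`, then `Q` contracts mean-zero vectors by `β` in `ℓ¹`. -/
lemma srt_contract [Nonempty V] (Q : Matrix V V ℝ)
    (β : ℝ) (hβ : ∀ z z', ∑ v, |Q z v - Q z' v| ≤ 2 * β)
    (x : V → ℝ) (hx : ∑ z, x z = 0) :
    ∑ v, |∑ z, x z * Q z v| ≤ β * ∑ z, |x z| := by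
  have hβ0 : 0 ≤ β := by
    rcases (inferInstance : Nonempty V) with ⟨z⟩
    have := hβ z z
    simp at this
    linarith
  set c : ℝ := ∑ z, max (x z) 0 with hc
  have hplusminus : ∀ a : ℝ, max a 0 - max (-a) 0 = a := by
    intro a
    rcases le_total a 0 with h | h
    · rw [max_eq_right h, max_eq_left (neg_nonneg.mpr h)]; ring
    · rw [max_eq_left h, max_eq_right (neg_nonpos.mpr h)]; ring
  have hcneg : ∑ z, max (-x z) 0 = c := by
    have h0 : ∑ z, (max (x z) 0 - max (-x z) 0) = 0 := by
      simp only [hplusminus]; exact hx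
    rw [Finset.sum_sub_distrib] at h0
    linarith
  have habs : ∀ a : ℝ, |a| = max a 0 + max (-a) 0 := by
    intro a; rcases le_total a 0 with h | h
    · rw [abs_of_nonpos h, max_eq_right h, max_eq_left (neg_nonneg.mpr h)]; ring
    · rw [abs_of_nonneg h, max_eq_left h, max_eq_right (neg_nonpos.mpr h)]; ring
  have hsumabs : ∑ z, |x z| = 2 * c := by
    simp only [habs, Finset.sum_add_distrib, hcneg, hc]; ring
  have hA0 : ∀ z, 0 ≤ max (x z) 0 := fun z => le_max_right _ _
  have hB0 : ∀ z, 0 ≤ max (-x z) 0 := fun z => le_max_right _ _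
  have hc0 : 0 ≤ c := Finset.sum_nonneg fun z _ => hA0 z
  rcases eq_or_lt_of_le hc0 with hc0' | hcpos
  · have hx0 : ∀ z, x z = 0 := by
      intro z
      have e1 : max (x z) 0 = 0 :=
        (Finset.sum_eq_zero_iff_of_nonneg (fun z _ => hA0 z)).mp hc0'.symm z (mem_univ z)
      have e2 : max (-x z) 0 = 0 := by
        have := hcneg.trans hc0'.symm
        exact (Finset.sum_eq_zero_iff_of_nonneg (fun z _ => hB0 z)).mp this z (mem_univ z)
      have := hplusminus (x z)
      rw [e1, e2] at this; linarith
    simp only [hx0, zero_mul, Finset.sum_const_zero, abs_zero]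
    positivity
  · have key : ∀ v, ∑ z, x z * Q z v
        = (1/c) * ∑ z, ∑ z', (max (x z) 0 * max (-x z') 0) * (Q z v - Q z' v) := by
      intro v
      have expand : ∑ z, ∑ z', (max (x z) 0 * max (-x z') 0) * (Q z v - Q z' v)
          = (∑ z, max (x z) 0 * Q z v) * (∑ z', max (-x z') 0)
            - (∑ z', max (-x z') 0 * Q z' v) * (∑ z, max (x z) 0) := by
        rw [Finset.sum_mul_sum, Finset.sum_mul_sum]
        rw [Finset.sum_comm (f := fun z' z => (max (-x z') 0 * Q z' v) * max (x z) 0)]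
        rw [← Finset.sum_sub_distrib]
        apply Finset.sum_congr rfl; intro z _
        rw [← Finset.sum_sub_distrib]
        apply Finset.sum_congr rfl; intro z' _
        ring
      rw [expand, hcneg, ← hc]
      have hxsplit : ∀ z, x z * Q z v = max (x z) 0 * Q z v - max (-x z) 0 * Q z v := by
        intro z; rw [← sub_mul, hplusminus]
      rw [Finset.sum_congr rfl (fun z _ => hxsplit z), Finset.sum_sub_distrib]
      field_simp
    calc ∑ v, |∑ z, x z * Q z v|
        ≤ ∑ v, (1/c) * ∑ z, ∑ z', (max (x z) 0 * max (-x z') 0) * |Q z v - Q z' v| := by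
          apply Finset.sum_le_sum; intro v _
          rw [key v, abs_mul, abs_of_nonneg (by positivity : (0:ℝ) ≤ 1/c)]
          apply mul_le_mul_of_nonneg_left _ (by positivity)
          calc |∑ z, ∑ z', (max (x z) 0 * max (-x z') 0) * (Q z v - Q z' v)|
              ≤ ∑ z, |∑ z', (max (x z) 0 * max (-x z') 0) * (Q z v - Q z' v)| :=
                Finset.abs_sum_le_sum_abs _ _
            _ ≤ ∑ z, ∑ z', |(max (x z) 0 * max (-x z') 0) * (Q z v - Q z' v)| := by
                apply Finset.sum_le_sum; intro z _; exact Finset.abs_sum_le_sum_abs _ _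
            _ = ∑ z, ∑ z', (max (x z) 0 * max (-x z') 0) * |Q z v - Q z' v| := by
                apply Finset.sum_congr rfl; intro z _
                apply Finset.sum_congr rfl; intro z' _
                rw [abs_mul, abs_of_nonneg (by positivity)]
      _ = (1/c) * ∑ z, ∑ z', (max (x z) 0 * max (-x z') 0) * ∑ v, |Q z v - Q z' v| := by
          rw [← Finset.mul_sum]; congr 1
          rw [Finset.sum_comm]
          apply Finset.sum_congr rfl; intro z _
          rw [Finset.sum_comm]
          apply Finset.sum_congr rfl; intro z' _
          rw [Finset.mul_sum]
      _ ≤ (1/c) * ∑ z, ∑ z', (max (x z) 0 * max (-x z') 0) * (2*β) := by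
          apply mul_le_mul_of_nonneg_left _ (by positivity)
          apply Finset.sum_le_sum; intro z _
          apply Finset.sum_le_sum; intro z' _
          exact mul_le_mul_of_nonneg_left (hβ z z') (by positivity)
      _ = (1/c) * (c * c * (2*β)) := by
          congr 1
          have h1 : ∀ z, ∑ z', (max (x z) 0 * max (-x z') 0) * (2*β)
              = (∑ z', max (x z) 0 * max (-x z') 0) * (2*β) := by
            intro z; rw [Finset.sum_mul]
          rw [Finset.sum_congr rfl (fun z _ => h1 z), ← Finset.sum_mul, ← Finset.sum_mul_sum,
            hcneg, ← hc]
      _ = β * ∑ z, |x z| := by rw [hsumabs]; field_simp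

end aux
open Finset
section aux2
set_option linter.unusedSectionVars false
variable {V : Type*} [Fintype V] [DecidableEq V] [Nonempty V]

/-- ℓ¹ distance of row `w` of `P^t` from `π`. -/
noncomputable def fbv (P : Matrix V V ℝ) (π : V → ℝ) (w : V) (t : ℕ) : ℝ :=
  ∑ v, |(P ^ t) w v - π v|

lemma fbv_nonneg (P : Matrix V V ℝ) (π : V → ℝ) (w : V) (t : ℕ) : 0 ≤ fbv P π w t :=
  Finset.sum_nonneg fun v _ => abs_nonneg _

lemma fbv_le_two (P : Matrix V V ℝ) (π : V → ℝ) (hP0 : ∀ u v, 0 ≤ P u v)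
    (hP1 : ∀ u, ∑ v, P u v = 1) (hπpos : ∀ v, 0 < π v)
    (hπ1 : ∑ v, π v = 1) (w : V) (t : ℕ) : fbv P π w t ≤ 2 := by
  unfold fbv
  calc ∑ v, |(P ^ t) w v - π v| ≤ ∑ v, (|(P ^ t) w v| + |π v|) := by
        apply Finset.sum_le_sum; intro v _; exact abs_sub _ _
    _ = 2 := by
        rw [Finset.sum_add_distrib]
        have h1 : ∑ v, |(P ^ t) w v| = 1 := by
          rw [Finset.sum_congr rfl fun v _ => abs_of_nonneg (srt_pow_nonneg P hP0 t w v)]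
          exact srt_pow_rowsum P hP1 t w
        have h2 : ∑ v, |π v| = 1 := by
          rw [Finset.sum_congr rfl fun v _ => abs_of_pos (hπpos v)]; exact hπ1
        rw [h1, h2]; norm_num

lemma fbv_row_zero_sum (P : Matrix V V ℝ) (π : V → ℝ) (hP1 : ∀ u, ∑ v, P u v = 1)
    (hπ1 : ∑ v, π v = 1) (w : V) (a : ℕ) : ∑ z, ((P ^ a) w z - π z) = 0 := by
  rw [Finset.sum_sub_distrib, srt_pow_rowsum P hP1 a w, hπ1, sub_self]

/-- decay: `fbv w (a+s) ≤ β * fbv w a` given the pair bound `β` at time `s`. -/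
lemma fbv_decay (P : Matrix V V ℝ) (π : V → ℝ)
    (hP1 : ∀ u, ∑ v, P u v = 1) (hπ1 : ∑ v, π v = 1)
    (hstat : ∀ v, ∑ u, π u * P u v = π v)
    (s : ℕ) (β : ℝ) (hβ : ∀ z z', ∑ v, |(P ^ s) z v - (P ^ s) z' v| ≤ 2 * β)
    (w : V) (a : ℕ) : fbv P π w (a + s) ≤ β * fbv P π w a := by
  have key : ∀ v, (P ^ (a + s)) w v - π v = ∑ z, ((P ^ a) w z - π z) * (P ^ s) z v := by
    intro v
    have hchap : (P ^ (a + s)) w v = ∑ z, (P ^ a) w z * (P ^ s) z v := by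
      rw [pow_add, Matrix.mul_apply]
    have hst : ∑ z, π z * (P ^ s) z v = π v := srt_pow_stat P π hstat s v
    rw [hchap, ← hst, ← Finset.sum_sub_distrib]
    apply Finset.sum_congr rfl; intro z _; ring
  unfold fbv
  rw [Finset.sum_congr rfl fun v _ => by rw [key v]]
  exact srt_contract (P ^ s) β hβ _ (fbv_row_zero_sum P π hP1 hπ1 w a)

/-- pair bounds multiply. -/
lemma pair_mul (P : Matrix V V ℝ) (hP1 : ∀ u, ∑ v, P u v = 1)
    (a b : ℕ) (βa βb : ℝ) (hb0 : 0 ≤ βb)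
    (ha : ∀ z z', ∑ v, |(P ^ a) z v - (P ^ a) z' v| ≤ 2 * βa)
    (hb : ∀ z z', ∑ v, |(P ^ b) z v - (P ^ b) z' v| ≤ 2 * βb) :
    ∀ z z', ∑ v, |(P ^ (a + b)) z v - (P ^ (a + b)) z' v| ≤ 2 * (βa * βb) := by
  intro z z'
  have key : ∀ v, (P ^ (a+b)) z v - (P ^ (a+b)) z' v
      = ∑ y, ((P ^ a) z y - (P ^ a) z' y) * (P ^ b) y v := by
    intro v
    rw [pow_add, Matrix.mul_apply, Matrix.mul_apply, ← Finset.sum_sub_distrib]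
    apply Finset.sum_congr rfl; intro y _; ring
  have hx : ∑ y, ((P ^ a) z y - (P ^ a) z' y) = 0 := by
    rw [Finset.sum_sub_distrib, srt_pow_rowsum P hP1 a z, srt_pow_rowsum P hP1 a z',
      sub_self]
  calc ∑ v, |(P ^ (a+b)) z v - (P ^ (a+b)) z' v|
      = ∑ v, |∑ y, ((P ^ a) z y - (P ^ a) z' y) * (P ^ b) y v| := by
        apply Finset.sum_congr rfl; intro v _; rw [key v]
    _ ≤ βb * ∑ y, |(P ^ a) z y - (P ^ a) z' y| := srt_contract (P ^ b) βb hb _ hx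
    _ ≤ βb * (2 * βa) := mul_le_mul_of_nonneg_left (ha z z') hb0
    _ = 2 * (βa * βb) := by ring

lemma pair_one (P : Matrix V V ℝ) (hP0 : ∀ u v, 0 ≤ P u v) (hP1 : ∀ u, ∑ v, P u v = 1)
    (s : ℕ) : ∀ z z', ∑ v, |(P ^ s) z v - (P ^ s) z' v| ≤ 2 * 1 := by
  intro z z'
  calc ∑ v, |(P ^ s) z v - (P ^ s) z' v| ≤ ∑ v, (|(P ^ s) z v| + |(P ^ s) z' v|) := by
        apply Finset.sum_le_sum; intro v _; exact abs_sub _ _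
    _ = 2 * 1 := by
      rw [Finset.sum_add_distrib]
      have h : ∀ y : V, ∑ v, |(P ^ s) y v| = 1 := by
        intro y
        rw [Finset.sum_congr rfl fun v _ => abs_of_nonneg (srt_pow_nonneg P hP0 s y v)]
        exact srt_pow_rowsum P hP1 s y
      rw [h, h]; norm_num

/-- monotone extension of pair bounds. -/
lemma pair_mono (P : Matrix V V ℝ) (hP0 : ∀ u v, 0 ≤ P u v) (hP1 : ∀ u, ∑ v, P u v = 1)
    (s s' : ℕ) (hss : s ≤ s') (β : ℝ)
    (hs : ∀ z z', ∑ v, |(P ^ s) z v - (P ^ s) z' v| ≤ 2 * β) :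
    ∀ z z', ∑ v, |(P ^ s') z v - (P ^ s') z' v| ≤ 2 * β := by
  have hb0 : 0 ≤ (1:ℝ) := zero_le_one
  have := pair_mul P hP1 s (s' - s) β 1 hb0 hs (pair_one P hP0 hP1 _)
  rw [Nat.add_sub_cancel' hss] at this
  intro z z'
  have h := this z z'
  linarith [h]

/-- pair bound `(1/2)^m` at time `m * tstar`. -/
lemma pair_pow (P : Matrix V V ℝ) (π : V → ℝ) (hP0 : ∀ u v, 0 ≤ P u v)
    (hP1 : ∀ u, ∑ v, P u v = 1) (tstar : ℕ)
    (hq : ∀ u, fbv P π u tstar ≤ 1/2) :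
    ∀ m : ℕ, ∀ z z', ∑ v, |(P ^ (m * tstar)) z v - (P ^ (m * tstar)) z' v|
      ≤ 2 * ((1/2:ℝ)) ^ m := by
  have hpt : ∀ z z', ∑ v, |(P ^ tstar) z v - (P ^ tstar) z' v| ≤ 2 * (1/2:ℝ) := by
    intro z z'
    calc ∑ v, |(P ^ tstar) z v - (P ^ tstar) z' v|
        ≤ ∑ v, (|(P ^ tstar) z v - π v| + |(P ^ tstar) z' v - π v|) := by
          apply Finset.sum_le_sum; intro v _
          calc |(P ^ tstar) z v - (P ^ tstar) z' v|
              = |((P ^ tstar) z v - π v) - ((P ^ tstar) z' v - π v)| := by ring_nf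
            _ ≤ _ := abs_sub _ _
      _ = fbv P π z tstar + fbv P π z' tstar := by
          rw [Finset.sum_add_distrib]; rfl
      _ ≤ 2 * (1/2:ℝ) := by
          have := hq z; have := hq z'; unfold fbv at *; linarith
  intro m
  induction m with
  | zero => simpa using pair_one P hP0 hP1 0
  | succ n ih =>
      have h := pair_mul P hP1 (n * tstar) tstar ((1/2:ℝ)^n) (1/2:ℝ) (by norm_num) ih hpt
      intro z z'
      have := h z z'
      have harith : (n*tstar + tstar) = (n+1) * tstar := by ring
      rw [harith] at this
      calc ∑ v, |(P ^ ((n+1) * tstar)) z v - (P ^ ((n+1) * tstar)) z' v|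
          ≤ 2 * ((1/2:ℝ)^n * (1/2)) := this
        _ = 2 * (1/2:ℝ)^(n+1) := by ring

end aux2
section aux3
set_option linter.unusedSectionVars false
variable {V : Type*} [Fintype V] [DecidableEq V] [Nonempty V]

lemma geoblock (tstar : ℕ) (h1 : 1 ≤ tstar) (K : ℕ) :
    ∑ s ∈ range K, ((1/2:ℝ)) ^ (s / tstar) ≤ 2 * tstar := by
  have hpos : 0 < tstar := h1
  have hblock : ∀ m : ℕ, ∑ s ∈ range (m * tstar), ((1/2:ℝ)) ^ (s / tstar)
      = (∑ i ∈ range m, ((1/2:ℝ)) ^ i) * tstar := by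
    intro m
    induction m with
    | zero => simp
    | succ n ih =>
        have : (n+1) * tstar = n * tstar + tstar := by ring
        rw [this, Finset.sum_range_add, ih, Finset.sum_range_succ]
        have hdiv : ∀ j, j < tstar → (n * tstar + j) / tstar = n := by
          intro j hj
          rw [add_comm, Nat.add_mul_div_right _ _ hpos, Nat.div_eq_of_lt hj, zero_add]
        have : ∑ j ∈ range tstar, ((1/2:ℝ)) ^ ((n * tstar + j) / tstar)
            = ∑ j ∈ range tstar, ((1/2:ℝ)) ^ n := by
          apply Finset.sum_congr rfl; intro j hj
          rw [hdiv j (Finset.mem_range.mp hj)]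
        rw [this, Finset.sum_const, Finset.card_range]
        push_cast
        ring
  have hKle : K ≤ K * tstar := Nat.le_mul_of_pos_right K hpos
  have hsub : ∑ s ∈ range K, ((1/2:ℝ)) ^ (s / tstar)
      ≤ ∑ s ∈ range (K * tstar), ((1/2:ℝ)) ^ (s / tstar) := by
    apply Finset.sum_le_sum_of_subset_of_nonneg
    · exact Finset.range_subset_range.mpr hKle
    · intro i _ _; positivity
  have hgeom : (∑ i ∈ range K, ((1/2:ℝ)) ^ i) ≤ 2 := by
    have h := geom_sum_eq (by norm_num : (1/2:ℝ) ≠ 1) K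
    rw [h]
    have hp : (0:ℝ) < (1/2:ℝ)^K := by positivity
    rw [div_le_iff_of_neg (by norm_num : (1/2:ℝ) - 1 < 0)]
    linarith
  calc ∑ s ∈ range K, ((1/2:ℝ)) ^ (s / tstar)
      ≤ ∑ s ∈ range (K * tstar), ((1/2:ℝ)) ^ (s / tstar) := hsub
    _ = (∑ i ∈ range K, ((1/2:ℝ)) ^ i) * tstar := hblock K
    _ ≤ 2 * tstar := by
        apply mul_le_mul_of_nonneg_right hgeom
        positivity

/-- if `tstar = 0` works (i.e. `fbv ≤ 1/2` at time 0 for every state) then `V` has one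
element and everything is exactly stationary. -/
lemma fbv_eq_zero_of_tstar_zero (P : Matrix V V ℝ) (π : V → ℝ)
    (hP1 : ∀ u, ∑ v, P u v = 1) (hπpos : ∀ v, 0 < π v) (hπ1 : ∑ v, π v = 1)
    (hq : ∀ u, fbv P π u 0 ≤ 1/2) : ∀ w t, fbv P π w t = 0 := by
  have hπ34 : ∀ u, (3/4:ℝ) ≤ π u := by
    intro u
    have h := hq u
    unfold fbv at h
    have : ∑ v, |(P ^ 0) u v - π v|
        = |1 - π u| + ∑ v ∈ univ.erase u, |(0:ℝ) - π v| := by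
      rw [← Finset.add_sum_erase _ _ (Finset.mem_univ u)]
      congr 1
      · rw [pow_zero, Matrix.one_apply_eq]
      · apply Finset.sum_congr rfl; intro v hv
        rw [pow_zero, Matrix.one_apply_ne' (Finset.ne_of_mem_erase hv)]
    rw [this] at h
    have h2 : ∑ v ∈ univ.erase u, |(0:ℝ) - π v| = 1 - π u := by
      have : ∀ v ∈ univ.erase u, |(0:ℝ) - π v| = π v := by
        intro v _; rw [zero_sub, abs_neg, abs_of_pos (hπpos v)]
      rw [Finset.sum_congr rfl this]
      have := Finset.add_sum_erase univ π (Finset.mem_univ u)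
      rw [hπ1] at this
      linarith
    have hπle1 : π u ≤ 1 := by
      have := Finset.single_le_sum (f := π) (fun v _ => le_of_lt (hπpos v)) (Finset.mem_univ u)
      linarith [hπ1 ▸ this]
    rw [h2, abs_of_nonneg (by linarith : (0:ℝ) ≤ 1 - π u)] at h
    linarith
  -- hence V is a singleton
  have hsub : ∀ u v : V, u = v := by
    intro u v
    by_contra hne
    have : (3/4:ℝ) + 3/4 ≤ π u + π v := add_le_add (hπ34 u) (hπ34 v)
    have hle : π u + π v ≤ ∑ x, π x := by
      have h2 : ({u, v} : Finset V) ⊆ univ := Finset.subset_univ _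
      have hsum : ∑ x ∈ ({u, v} : Finset V), π x = π u + π v := by
        rw [Finset.sum_insert (by simp [hne]), Finset.sum_singleton]
      rw [← hsum]
      apply Finset.sum_le_sum_of_subset_of_nonneg h2
      intro x _ _; exact le_of_lt (hπpos x)
    rw [hπ1] at hle
    linarith
  intro w t
  have huniv : (univ : Finset V) = {w} := by
    apply Finset.eq_singleton_iff_unique_mem.mpr
    exact ⟨Finset.mem_univ w, fun x _ => hsub x w⟩
  have hπw : π w = 1 := by rw [← hπ1, huniv, Finset.sum_singleton]
  have hPw : (P ^ t) w w = 1 := by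
    have := srt_pow_rowsum P hP1 t w
    rwa [huniv, Finset.sum_singleton] at this
  unfold fbv
  rw [huniv, Finset.sum_singleton, hPw, hπw, sub_self, abs_zero]

/-- The master tail bound: `∑_{r<N} fbv w r ≤ 3 tstar`. -/
lemma sumf (P : Matrix V V ℝ) (π : V → ℝ) (hP0 : ∀ u v, 0 ≤ P u v)
    (hP1 : ∀ u, ∑ v, P u v = 1) (hπpos : ∀ v, 0 < π v) (hπ1 : ∑ v, π v = 1)
    (hstat : ∀ v, ∑ u, π u * P u v = π v) (tstar : ℕ)
    (hq : ∀ u t, tstar ≤ t → fbv P π u t ≤ 1/2) :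
    ∀ (w : V) (N : ℕ), ∑ r ∈ range N, fbv P π w r ≤ 3 * tstar := by
  intro w N
  rcases Nat.eq_zero_or_pos tstar with h0 | hpos
  · have hz := fbv_eq_zero_of_tstar_zero P π hP1 hπpos hπ1
      (fun u => by simpa [h0] using hq u 0 (by omega))
    rw [Finset.sum_congr rfl fun r _ => hz w r]
    simp
  · have htail : ∀ s : ℕ, fbv P π w (tstar + s) ≤ ((1/2:ℝ)) ^ (s / tstar) * (1/2) := by
      intro s
      have hpair : ∀ z z', ∑ v, |(P ^ s) z v - (P ^ s) z' v| ≤ 2 * ((1/2:ℝ))^(s / tstar) := by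
        apply pair_mono P hP0 hP1 ((s / tstar) * tstar) s (Nat.div_mul_le_self s tstar)
        exact pair_pow P π hP0 hP1 tstar (fun u => hq u tstar le_rfl) (s / tstar)
      have hd := fbv_decay P π hP1 hπ1 hstat s (((1/2:ℝ))^(s / tstar)) hpair w tstar
      calc fbv P π w (tstar + s) ≤ ((1/2:ℝ))^(s / tstar) * fbv P π w tstar := hd
        _ ≤ ((1/2:ℝ))^(s / tstar) * (1/2) := by
            apply mul_le_mul_of_nonneg_left (hq w tstar le_rfl) (by positivity)
    have hNle : N ≤ tstar + (N - tstar) := by omega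
    calc ∑ r ∈ range N, fbv P π w r
        ≤ ∑ r ∈ range (tstar + (N - tstar)), fbv P π w r := by
          apply Finset.sum_le_sum_of_subset_of_nonneg (Finset.range_subset_range.mpr hNle)
          intro i _ _; exact fbv_nonneg P π w i
      _ = ∑ r ∈ range tstar, fbv P π w r
          + ∑ s ∈ range (N - tstar), fbv P π w (tstar + s) := Finset.sum_range_add _ _ _
      _ ≤ 2 * tstar + ∑ s ∈ range (N - tstar), ((1/2:ℝ)) ^ (s / tstar) * (1/2) := by
          apply add_le_add
          · calc ∑ r ∈ range tstar, fbv P π w r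
                ≤ ∑ _r ∈ range tstar, (2:ℝ) := by
                  apply Finset.sum_le_sum
                  intro r _; exact fbv_le_two P π hP0 hP1 hπpos hπ1 w r
              _ = 2 * tstar := by rw [Finset.sum_const, Finset.card_range]; ring
          · exact Finset.sum_le_sum fun s _ => htail s
      _ ≤ 2 * tstar + (2 * tstar) * (1/2) := by
          have := geoblock tstar hpos (N - tstar)
          rw [← Finset.sum_mul]
          nlinarith [this]
      _ = 3 * tstar := by ring

/-- pointwise lower bound `P^t u w ≥ π w / 4` for `t ≥ 2 tstar`. -/
lemma pow_lower (P : Matrix V V ℝ) (π : V → ℝ) (hP0 : ∀ u v, 0 ≤ P u v)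
    (hP1 : ∀ u, ∑ v, P u v = 1) (hπpos : ∀ v, 0 < π v) (hπ1 : ∑ v, π v = 1)
    (hrev : ∀ u v, π u * P u v = π v * P v u) (tstar : ℕ)
    (hq : ∀ u t, tstar ≤ t → fbv P π u t ≤ 1/2) :
    ∀ (u w : V) (t : ℕ), 2 * tstar ≤ t → π w / 4 ≤ (P ^ t) u w := by
  intro u w t ht
  have htab : t = tstar + (t - tstar) := by omega
  set a := tstar with ha
  set b := t - tstar with hb
  have hbt : tstar ≤ b := by omega
  set m : V → ℝ := fun v => min ((P ^ a) u v) ((P ^ b) w v) with hm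
  have hA0 : ∀ v, 0 ≤ (P ^ a) u v := fun v => srt_pow_nonneg P hP0 a u v
  have hB0 : ∀ v, 0 ≤ (P ^ b) w v := fun v => srt_pow_nonneg P hP0 b w v
  have hm0 : ∀ v, 0 ≤ m v := fun v => le_min (hA0 v) (hB0 v)
  have hmA : ∀ v, m v ≤ (P ^ a) u v := fun v => min_le_left _ _
  have hmB : ∀ v, m v ≤ (P ^ b) w v := fun v => min_le_right _ _
  have hmin_half : (1/2:ℝ) ≤ ∑ v, m v := by
    have hminf : ∀ v, m v = ((P ^ a) u v + (P ^ b) w v - |(P ^ a) u v - (P ^ b) w v|) / 2 := by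
      intro v
      rcases le_total ((P ^ a) u v) ((P ^ b) w v) with h | h
      · rw [hm]; simp only []
        rw [min_eq_left h, abs_of_nonpos (by linarith)]; ring
      · rw [hm]; simp only []
        rw [min_eq_right h, abs_of_nonneg (by linarith)]; ring
    have hAB : ∑ v, |(P ^ a) u v - (P ^ b) w v| ≤ 1 := by
      calc ∑ v, |(P ^ a) u v - (P ^ b) w v|
          ≤ ∑ v, (|(P ^ a) u v - π v| + |(P ^ b) w v - π v|) := by
            apply Finset.sum_le_sum; intro v _
            calc |(P ^ a) u v - (P ^ b) w v|
                = |((P ^ a) u v - π v) - ((P ^ b) w v - π v)| := by ring_nf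
              _ ≤ _ := abs_sub _ _
        _ = fbv P π u a + fbv P π w b := by rw [Finset.sum_add_distrib]; rfl
        _ ≤ 1/2 + 1/2 := add_le_add (hq u a le_rfl) (hq w b hbt)
        _ = 1 := by norm_num
    have hsums : ∑ v, m v
        = (∑ v, (P ^ a) u v + ∑ v, (P ^ b) w v - ∑ v, |(P ^ a) u v - (P ^ b) w v|) / 2 := by
      rw [Finset.sum_congr rfl fun v _ => hminf v, ← Finset.sum_div,
        Finset.sum_sub_distrib, Finset.sum_add_distrib]
    rw [hsums, srt_pow_rowsum P hP1 a u, srt_pow_rowsum P hP1 b w]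
    linarith
  have hCS : (∑ v, m v) ^ 2 ≤ ∑ v, (m v)^2 / π v := by
    have hs := Finset.sum_mul_sq_le_sq_mul_sq univ
      (fun v => m v / Real.sqrt (π v)) (fun v => Real.sqrt (π v))
    have h1 : ∀ v : V, m v / Real.sqrt (π v) * Real.sqrt (π v) = m v := fun v =>
      div_mul_cancel₀ _ (ne_of_gt (Real.sqrt_pos.mpr (hπpos v)))
    have h2 : ∀ v : V, (m v / Real.sqrt (π v))^2 = (m v)^2 / π v := by
      intro v
      rw [div_pow, Real.sq_sqrt (le_of_lt (hπpos v))]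
    have h3 : ∀ v : V, (Real.sqrt (π v))^2 = π v := fun v => Real.sq_sqrt (le_of_lt (hπpos v))
    rw [Finset.sum_congr rfl fun v _ => h1 v] at hs
    rw [Finset.sum_congr rfl fun v _ => h2 v] at hs
    rw [Finset.sum_congr rfl fun v _ => h3 v, hπ1, mul_one] at hs
    exact hs
  have hfinal : ∑ v, (m v)^2 / π v ≤ (P ^ t) u w / π w := by
    have hPt : (P ^ t) u w = ∑ v, (P ^ a) u v * ((P ^ b) v w) := by
      rw [htab, pow_add, Matrix.mul_apply]
    have hrevb : ∀ v, (P ^ b) v w = π w * (P ^ b) w v / π v := by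
      intro v
      rw [eq_div_iff (ne_of_gt (hπpos v))]
      calc (P ^ b) v w * π v = π v * (P ^ b) v w := by ring
        _ = π w * (P ^ b) w v := srt_pow_rev P π hrev b v w
    have hPt2 : (P ^ t) u w = π w * ∑ v, (P ^ a) u v * (P ^ b) w v / π v := by
      rw [hPt, Finset.mul_sum]
      apply Finset.sum_congr rfl; intro v _
      rw [hrevb v]
      field_simp
    rw [hPt2, mul_comm, mul_div_assoc, div_self (ne_of_gt (hπpos w)), mul_one]
    apply Finset.sum_le_sum
    intro v _
    apply (div_le_div_iff_of_pos_right (hπpos v)).mpr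
    calc (m v)^2 = m v * m v := sq (m v) ▸ rfl
      _ ≤ (P ^ a) u v * (P ^ b) w v :=
        mul_le_mul (hmA v) (hmB v) (hm0 v) (hA0 v)
  have h14 : (1/4:ℝ) ≤ (∑ v, m v)^2 := by nlinarith [hmin_half]
  have hchain : (1/4:ℝ) ≤ (P ^ t) u w / π w := le_trans (le_trans h14 hCS) hfinal
  rw [le_div_iff₀ (hπpos w)] at hchain
  linarith

/-- Doeblin-type existence: every mixing set is nonempty. -/
lemma exists_small (P : Matrix V V ℝ) (π : V → ℝ) (hP0 : ∀ u v, 0 ≤ P u v)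
    (hP1 : ∀ u, ∑ v, P u v = 1) (hπpos : ∀ v, 0 < π v) (hπ1 : ∑ v, π v = 1)
    (hstat : ∀ v, ∑ u, π u * P u v = π v)
    (herg : ∃ t0 : ℕ, ∀ u v, 0 < (P ^ t0) u v) (u : V) :
    ∃ t : ℕ, (1 / 2) * ∑ v, |(P ^ t) u v - π v| ≤ (1 / 4 : ℝ) := by
  obtain ⟨t0, ht0⟩ := herg
  set n : ℕ := Fintype.card V with hn
  set α : ℝ := univ.inf' univ_nonempty (fun p : V × V => (P ^ t0) p.1 p.2) with hα
  have hα0 : 0 < α := by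
    obtain ⟨p, _, hp⟩ := Finset.exists_mem_eq_inf' univ_nonempty
      (fun p : V × V => (P ^ t0) p.1 p.2)
    rw [hα, hp]
    exact ht0 p.1 p.2
  have hαle : ∀ z v : V, α ≤ (P ^ t0) z v := fun z v =>
    Finset.inf'_le _ (Finset.mem_univ (⟨z, v⟩ : V × V))
  have hna : (n:ℝ) * α ≤ 1 := by
    rcases (inferInstance : Nonempty V) with ⟨z⟩
    have : (n:ℝ) * α = ∑ _v : V, α := by
      rw [Finset.sum_const, hn]
      simp [mul_comm]
    rw [this, ← srt_pow_rowsum P hP1 t0 z]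
    exact Finset.sum_le_sum fun v _ => hαle z v
  have hstep : ∀ t : ℕ, fbv P π u (t + t0) ≤ (1 - n * α) * fbv P π u t := by
    intro t
    have key : ∀ v, (P ^ (t + t0)) u v - π v
        = ∑ z, ((P ^ t) u z - π z) * ((P ^ t0) z v - α) := by
      intro v
      have hx0 : ∑ z, ((P ^ t) u z - π z) = 0 := fbv_row_zero_sum P π hP1 hπ1 u t
      have hchap : (P ^ (t + t0)) u v = ∑ z, (P ^ t) u z * (P ^ t0) z v := by
        rw [pow_add, Matrix.mul_apply]
      have hst : ∑ z, π z * (P ^ t0) z v = π v := srt_pow_stat P π hstat t0 v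
      have expand : ∑ z, ((P ^ t) u z - π z) * ((P ^ t0) z v - α)
          = ∑ z, ((P ^ t) u z - π z) * (P ^ t0) z v - α * ∑ z, ((P ^ t) u z - π z) := by
        rw [Finset.mul_sum, ← Finset.sum_sub_distrib]
        apply Finset.sum_congr rfl; intro z _; ring
      rw [expand, hx0, mul_zero, sub_zero]
      have h2 : ∑ z, ((P ^ t) u z - π z) * (P ^ t0) z v
          = ∑ z, (P ^ t) u z * (P ^ t0) z v - ∑ z, π z * (P ^ t0) z v := by
        rw [← Finset.sum_sub_distrib]
        apply Finset.sum_congr rfl; intro z _; ring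
      rw [h2, ← hchap, hst]
    unfold fbv
    calc ∑ v, |(P ^ (t + t0)) u v - π v|
        = ∑ v, |∑ z, ((P ^ t) u z - π z) * ((P ^ t0) z v - α)| := by
          apply Finset.sum_congr rfl; intro v _; rw [key v]
      _ ≤ ∑ v, ∑ z, |(P ^ t) u z - π z| * ((P ^ t0) z v - α) := by
          apply Finset.sum_le_sum; intro v _
          calc |∑ z, ((P ^ t) u z - π z) * ((P ^ t0) z v - α)|
              ≤ ∑ z, |((P ^ t) u z - π z) * ((P ^ t0) z v - α)| :=
                Finset.abs_sum_le_sum_abs _ _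
            _ = ∑ z, |(P ^ t) u z - π z| * ((P ^ t0) z v - α) := by
                apply Finset.sum_congr rfl; intro z _
                rw [abs_mul]
                congr 1
                exact abs_of_nonneg (by linarith [hαle z v])
      _ = ∑ z, |(P ^ t) u z - π z| * ∑ v, ((P ^ t0) z v - α) := by
          rw [Finset.sum_comm]
          apply Finset.sum_congr rfl; intro z _
          rw [Finset.mul_sum]
      _ = ∑ z, |(P ^ t) u z - π z| * (1 - n * α) := by
          apply Finset.sum_congr rfl; intro z _
          congr 1
          rw [Finset.sum_sub_distrib, srt_pow_rowsum P hP1 t0 z, Finset.sum_const, hn]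
          simp [mul_comm]
      _ = (1 - n * α) * ∑ v, |(P ^ t) u v - π v| := by
          rw [← Finset.sum_mul]; ring
  have hiter : ∀ m : ℕ, fbv P π u (m * t0) ≤ (1 - n * α) ^ m * 2 := by
    intro m
    induction m with
    | zero =>
        simpa using fbv_le_two P π hP0 hP1 hπpos hπ1 u 0
    | succ j ih =>
        have harith : (j + 1) * t0 = j * t0 + t0 := by ring
        rw [harith]
        calc fbv P π u (j * t0 + t0) ≤ (1 - n * α) * fbv P π u (j * t0) := hstep _
          _ ≤ (1 - n * α) * ((1 - n * α) ^ j * 2) :=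
            mul_le_mul_of_nonneg_left ih (by linarith)
          _ = (1 - n * α) ^ (j+1) * 2 := by ring
  obtain ⟨mm, hmm⟩ := exists_pow_lt_of_lt_one (by norm_num : (0:ℝ) < 1/4)
    (by linarith [mul_pos (by exact_mod_cast (by positivity : (0:ℝ) < (n:ℝ)) : (0:ℝ) < (n:ℝ)) hα0] : 1 - (n:ℝ) * α < 1)
  refine ⟨mm * t0, ?_⟩
  have := hiter mm
  unfold fbv at this
  nlinarith [this, hmm]
end aux3
section aux4
set_option linter.unusedSectionVars false
variable {V : Type*} [Fintype V] [DecidableEq V] [Nonempty V]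

/-- number of `j < z` with `σ v j = u`. -/
def cnt (σ : V → ℕ → V) (v u : V) (z : ℕ) : ℕ :=
  ((range z).filter (fun j => σ v j = u)).card

/-- signed discrepancy of the router sequence. -/
noncomputable def Dd (P : Matrix V V ℝ) (σ : V → ℕ → V) (v u : V) (z : ℕ) : ℝ :=
  (cnt σ v u z : ℝ) - (z : ℝ) * P v u

/-- aggregated discrepancy. -/
noncomputable def Ef (P : Matrix V V ℝ) (σ : V → ℕ → V) (X : ℕ → V → ℕ)
    (u : V) (K : ℕ) : ℝ :=
  ∑ v, Dd P σ v u (X K v)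

lemma cnt_card_filter (σ : V → ℕ → V) (v u : V) (z : ℕ) :
    (cnt σ v u z : ℕ) = ∑ j ∈ range z, (if σ v j = u then 1 else 0) := by
  unfold cnt
  rw [Finset.card_filter]

lemma cnt_add (σ : V → ℕ → V) (v u : V) (a b : ℕ) :
    cnt σ v u (a + b) = cnt σ v u a + ((range b).filter (fun j => σ v (a + j) = u)).card := by
  rw [cnt_card_filter, cnt_card_filter, Finset.card_filter, Finset.sum_range_add]

lemma cnt_fiber_sum (σ : V → ℕ → V) (v : V) (z : ℕ) :
    ∑ u, cnt σ v u z = z := by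
  have h := Finset.card_eq_sum_card_fiberwise
    (f := fun j => σ v j) (s := range z) (t := (univ : Finset V))
    (fun x _ => Finset.mem_univ _)
  rw [Finset.card_range] at h
  exact (Finset.sum_congr rfl fun u _ => rfl).trans h.symm

lemma Dd_zero (P : Matrix V V ℝ) (σ : V → ℕ → V) (v u : V) : Dd P σ v u 0 = 0 := by
  unfold Dd cnt
  simp

lemma Dd_abs_le (P : Matrix V V ℝ) (σ : V → ℕ → V) (hP0 : ∀ u v, 0 ≤ P u v)
    (hσ : ∀ v u (z : ℕ), 0 < z →
      |(((range z).filter (fun j => σ v j = u)).card : ℝ) - (z : ℝ) * P v u| < 1)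
    (v u : V) (z : ℕ) : |Dd P σ v u z| ≤ if 0 < P v u then (1:ℝ) else 0 := by
  rcases Nat.eq_zero_or_pos z with rfl | hz
  · rw [Dd_zero]
    simp only [abs_zero]
    split <;> norm_num
  · have h := hσ v u z hz
    by_cases hP : 0 < P v u
    · rw [if_pos hP]
      exact le_of_lt h
    · rw [if_neg hP]
      have hP00 : P v u = 0 := le_antisymm (not_lt.mp hP) (hP0 v u)
      unfold Dd cnt
      rw [hP00, mul_zero, sub_zero]
      have hcnt : (((range z).filter (fun j => σ v j = u)).card : ℝ) < 1 := by
        have := h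
        rw [hP00, mul_zero, sub_zero] at this
        calc (((range z).filter (fun j => σ v j = u)).card : ℝ)
            ≤ |(((range z).filter (fun j => σ v j = u)).card : ℝ)| := le_abs_self _
          _ < 1 := this
      have hc0 : ((range z).filter (fun j => σ v j = u)).card = 0 :=
        Nat.lt_one_iff.mp (by exact_mod_cast hcnt)
      rw [hc0]
      simp

lemma Ef_zero (P : Matrix V V ℝ) (σ : V → ℕ → V) (X : ℕ → V → ℕ) (hX0 : ∀ v, X 0 v = 0)
    (u : V) : Ef P σ X u 0 = 0 := by
  unfold Ef
  rw [Finset.sum_congr rfl fun v _ => by rw [hX0 v, Dd_zero]]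
  simp

lemma Ef_abs_le (P : Matrix V V ℝ) (σ : V → ℕ → V) (X : ℕ → V → ℕ)
    (hP0 : ∀ u v, 0 ≤ P u v)
    (hσ : ∀ v u (z : ℕ), 0 < z →
      |(((range z).filter (fun j => σ v j = u)).card : ℝ) - (z : ℝ) * P v u| < 1)
    (u : V) (K : ℕ) :
    |Ef P σ X u K| ≤ ((univ.filter fun v => 0 < P v u).card : ℝ) := by
  unfold Ef
  calc |∑ v, Dd P σ v u (X K v)| ≤ ∑ v, |Dd P σ v u (X K v)| :=
        Finset.abs_sum_le_sum_abs _ _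
    _ ≤ ∑ v, (if 0 < P v u then (1:ℝ) else 0) :=
        Finset.sum_le_sum fun v _ => Dd_abs_le P σ hP0 hσ v u (X K v)
    _ = ((univ.filter fun v => 0 < P v u).card : ℝ) := by
        rw [Finset.sum_boole]

lemma Ef_sum_zero (P : Matrix V V ℝ) (σ : V → ℕ → V) (X : ℕ → V → ℕ)
    (hP1 : ∀ u, ∑ v, P u v = 1) (K : ℕ) :
    ∑ u, Ef P σ X u K = 0 := by
  unfold Ef Dd
  rw [Finset.sum_comm]
  apply Finset.sum_eq_zero
  intro v _
  rw [Finset.sum_sub_distrib]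
  have h1 : ∑ u, (cnt σ v u (X K v) : ℝ) = (X K v : ℝ) := by
    rw [← Nat.cast_sum, cnt_fiber_sum σ v (X K v)]
  have h2 : ∑ u, (X K v : ℝ) * P v u = (X K v : ℝ) := by
    rw [← Finset.mul_sum, hP1, mul_one]
  rw [h1, h2, sub_self]

lemma sum_mul_one_apply (c : V → ℝ) (w : V) :
    ∑ u, c u * (1 : Matrix V V ℝ) u w = c w := by
  rw [Finset.sum_eq_single w]
  · rw [Matrix.one_apply_eq, mul_one]
  · intro u _ hu
    rw [Matrix.one_apply_ne hu, mul_zero]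
  · intro h
    exact absurd (Finset.mem_univ w) h

end aux4
/-- Theorem 2 (cover time of the SRT-router model): for ergodic reversible `P` and `k ≥ 1` tokens,
`T_cover ≤ 2t* + 1 + 12 max_u(δ(u)/π_u) t* / k`. -/
theorem srt_cover_time {V : Type*} [Fintype V] [DecidableEq V] [Nonempty V]
    (P : Matrix V V ℝ) (π : V → ℝ)
    (hP0 : ∀ u v, 0 ≤ P u v) (hP1 : ∀ u, ∑ v, P u v = 1)
    (herg : ∃ t0 : ℕ, ∀ u v, 0 < (P ^ t0) u v)
    (hπpos : ∀ v, 0 < π v) (hπ1 : ∑ v, π v = 1)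
    (hstat : ∀ v, ∑ u, π u * P u v = π v)
    (hrev : ∀ u v, π u * P u v = π v * P v u)
    (tstar : ℕ)
    (htstar : tstar = univ.sup fun u =>
      sInf {t : ℕ | (1 / 2) * ∑ v, |(P ^ t) u v - π v| ≤ (1 / 4 : ℝ)})
    (σ : V → ℕ → V)
    (hσ : ∀ v u (z : ℕ), 0 < z →
      |(((range z).filter (fun j => σ v j = u)).card : ℝ) - (z : ℝ) * P v u| < 1)
    (χ : ℕ → V → ℕ) (X : ℕ → V → ℕ)
    (hX : ∀ t v, X t v = ∑ s ∈ range t, χ s v)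
    (Z : ℕ → V → V → ℕ)
    (hZ : ∀ t v u, Z t v u = ((range (χ t v)).filter (fun j => σ v (X t v + j) = u)).card)
    (hrec : ∀ t u, χ (t + 1) u = ∑ v, Z t v u)
    (k : ℕ) (hk : ∑ v, χ 0 v = k) (hk1 : 1 ≤ k)
    (Tcover : ℕ) (hTc : Tcover = sInf {T : ℕ | ∀ v, 1 ≤ X T v}) :
    (Tcover : ℝ) ≤ 2 * tstar + 1 +
      12 * (univ.sup' univ_nonempty
        (fun u => ((univ.filter fun x => 0 < P u x).card : ℝ) / π u)) * tstar / k := by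
  classical
  set M : ℝ := univ.sup' univ_nonempty
      (fun u => ((univ.filter fun x => 0 < P u x).card : ℝ) / π u) with hM
  -- degree facts
  have hMle : ∀ u : V, ((univ.filter fun x => 0 < P u x).card : ℝ) / π u ≤ M := by
    intro u
    rw [hM]
    exact Finset.le_sup' (fun u => ((univ.filter fun x => 0 < P u x).card : ℝ) / π u)
      (Finset.mem_univ u)
  have hM0 : 0 ≤ M := by
    obtain ⟨u⟩ := (inferInstance : Nonempty V)
    exact le_trans (div_nonneg (Nat.cast_nonneg _) (le_of_lt (hπpos u))) (hMle u)
  have hdeg_eq : ∀ u : V, (univ.filter fun v => 0 < P v u).card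
      = (univ.filter fun x => 0 < P u x).card := by
    intro u
    congr 1
    apply Finset.filter_congr
    intro v _
    constructor
    · intro h
      have h2 : 0 < π u * P u v := by rw [hrev]; exact mul_pos (hπpos v) h
      nlinarith [hπpos u, hP0 u v]
    · intro h
      have h2 : 0 < π v * P v u := by rw [← hrev]; exact mul_pos (hπpos u) h
      nlinarith [hπpos v, hP0 v u]
  -- mixing facts
  have hq : ∀ u t, tstar ≤ t → fbv P π u t ≤ 1/2 := by
    intro u t ht
    have hne : {t : ℕ | (1 / 2) * ∑ v, |(P ^ t) u v - π v| ≤ (1 / 4 : ℝ)}.Nonempty :=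
      exists_small P π hP0 hP1 hπpos hπ1 hstat herg u
    have hmem := Nat.sInf_mem hne
    have hle : sInf {t : ℕ | (1 / 2) * ∑ v, |(P ^ t) u v - π v| ≤ (1 / 4 : ℝ)} ≤ tstar := by
      rw [htstar]
      exact Finset.le_sup (f := fun u => sInf {t : ℕ | (1 / 2) * ∑ v, |(P ^ t) u v - π v| ≤ (1 / 4 : ℝ)}) (Finset.mem_univ u)
    set s0 := sInf {t : ℕ | (1 / 2) * ∑ v, |(P ^ t) u v - π v| ≤ (1 / 4 : ℝ)} with hs0
    have hhalf : fbv P π u s0 ≤ 1/2 := by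
      have h : (1 / 2) * ∑ v, |(P ^ s0) u v - π v| ≤ (1 / 4 : ℝ) := hmem
      unfold fbv
      linarith
    have hts : t = s0 + (t - s0) := by omega
    rw [hts]
    calc fbv P π u (s0 + (t - s0)) ≤ 1 * fbv P π u s0 :=
          fbv_decay P π hP1 hπ1 hstat _ 1 (pair_one P hP0 hP1 _) u _
      _ ≤ 1/2 := by linarith
  -- dynamics basics
  have hX0 : ∀ v, X 0 v = 0 := by intro v; rw [hX]; simp
  have hXsucc : ∀ t v, X (t+1) v = X t v + χ t v := by
    intro t v; rw [hX, hX, Finset.sum_range_succ]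
  have hcntZ : ∀ t v u, cnt σ v u (X (t+1) v) = cnt σ v u (X t v) + Z t v u := by
    intro t v u
    rw [hXsucc, cnt_add, hZ]
  have hstepE : ∀ t w, (χ (t+1) w : ℝ)
      = ∑ v, (χ t v : ℝ) * P v w + (Ef P σ X w (t+1) - Ef P σ X w t) := by
    intro t w
    have hper : ∀ v, Dd P σ v w (X (t+1) v) - Dd P σ v w (X t v)
        = (Z t v w : ℝ) - (χ t v : ℝ) * P v w := by
      intro v
      unfold Dd
      have h1 : (cnt σ v w (X (t+1) v) : ℝ) = (cnt σ v w (X t v) : ℝ) + (Z t v w : ℝ) := by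
        exact_mod_cast congrArg (fun n : ℕ => (n:ℝ)) (hcntZ t v w)
      have h2 : ((X (t+1) v : ℕ) : ℝ) = (X t v : ℝ) + (χ t v : ℝ) := by
        exact_mod_cast congrArg (fun n : ℕ => (n:ℝ)) (hXsucc t v)
      rw [h1, h2]; ring
    have hEdiff : Ef P σ X w (t+1) - Ef P σ X w t
        = ∑ v, ((Z t v w : ℝ) - (χ t v : ℝ) * P v w) := by
      unfold Ef
      rw [← Finset.sum_sub_distrib]
      exact Finset.sum_congr rfl fun v _ => hper v
    rw [hEdiff, Finset.sum_sub_distrib]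
    have h3 : (χ (t+1) w : ℝ) = ∑ v, (Z t v w : ℝ) := by
      rw [hrec t w]; push_cast; rfl
    rw [h3]
    ring
  -- one-step expansion iterated
  have L1 : ∀ N w, (χ (N+1) w : ℝ) = ∑ u, (χ 0 u : ℝ) * (P^(N+1)) u w
      + ∑ r ∈ range (N+1), ∑ u,
          (Ef P σ X u (N-r+1) - Ef P σ X u (N-r)) * (P^r) u w := by
    intro N
    induction N with
    | zero =>
        intro w
        rw [hstepE 0 w, Finset.sum_range_one]
        simp only [pow_zero, pow_one, Nat.sub_self]
        rw [sum_mul_one_apply]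
        norm_num
    | succ N ih =>
        intro w
        rw [hstepE (N+1) w]
        rw [Finset.sum_congr rfl fun v _ => by rw [ih v]]
        rw [Finset.sum_congr rfl fun v (_ : v ∈ univ) => add_mul
          (∑ u, (χ 0 u : ℝ) * (P^(N+1)) u v)
          (∑ r ∈ range (N+1), ∑ u, (Ef P σ X u (N-r+1) - Ef P σ X u (N-r)) * (P^r) u v)
          (P v w)]
        rw [Finset.sum_add_distrib]
        have hfirst : ∑ v, (∑ u, (χ 0 u:ℝ) * (P^(N+1)) u v) * P v w
            = ∑ u, (χ 0 u:ℝ) * (P^(N+2)) u w := by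
          rw [Finset.sum_congr rfl fun v (_ : v ∈ univ) => Finset.sum_mul univ
            (fun u => (χ 0 u:ℝ) * (P^(N+1)) u v) (P v w)]
          rw [Finset.sum_comm]
          apply Finset.sum_congr rfl; intro u _
          have : (P^(N+2)) u w = ∑ v, (P^(N+1)) u v * P v w := by
            rw [pow_succ, Matrix.mul_apply]
          rw [this, Finset.mul_sum]
          apply Finset.sum_congr rfl; intro v _; ring
        have hsecond : ∑ v, (∑ r ∈ range (N+1), ∑ u,
              (Ef P σ X u (N-r+1) - Ef P σ X u (N-r)) * (P^r) u v) * P v w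
            = ∑ r ∈ range (N+1), ∑ u,
              (Ef P σ X u (N-r+1) - Ef P σ X u (N-r)) * (P^(r+1)) u w := by
          rw [Finset.sum_congr rfl fun v (_ : v ∈ univ) => Finset.sum_mul (range (N+1))
            (fun r => ∑ u, (Ef P σ X u (N-r+1) - Ef P σ X u (N-r)) * (P^r) u v) (P v w)]
          rw [Finset.sum_comm]
          apply Finset.sum_congr rfl; intro r _
          rw [Finset.sum_congr rfl fun v (_ : v ∈ univ) => Finset.sum_mul univ
            (fun u => (Ef P σ X u (N-r+1) - Ef P σ X u (N-r)) * (P^r) u v) (P v w)]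
          rw [Finset.sum_comm]
          apply Finset.sum_congr rfl; intro u _
          have : (P^(r+1)) u w = ∑ v, (P^r) u v * P v w := by
            rw [pow_succ, Matrix.mul_apply]
          rw [this, Finset.mul_sum]
          apply Finset.sum_congr rfl; intro v _; ring
        rw [hfirst, hsecond]
        have htarget : ∑ r ∈ range (N+2), ∑ u,
            (Ef P σ X u (N+1-r+1) - Ef P σ X u (N+1-r)) * (P^r) u w
            = ∑ r ∈ range (N+1), ∑ u,
              (Ef P σ X u (N-r+1) - Ef P σ X u (N-r)) * (P^(r+1)) u w
              + (Ef P σ X w (N+2) - Ef P σ X w (N+1)) := by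
          rw [Finset.sum_range_succ' (fun r => ∑ u,
            (Ef P σ X u (N+1-r+1) - Ef P σ X u (N+1-r)) * (P^r) u w) (N+1)]
          congr 1
          · apply Finset.sum_congr rfl; intro r hr
            have e1 : N+1-(r+1) = N - r := by omega
            rw [e1]
          · simp only [pow_zero, Nat.sub_zero]
            rw [sum_mul_one_apply]
        rw [htarget]
        ring
  -- summed identity
  have hEf0 : ∀ u : V, Ef P σ X u 0 = 0 := Ef_zero P σ X hX0
  have CID : ∀ N w, ((X (N+1) w : ℕ) : ℝ)
      = ∑ t ∈ range (N+1), ∑ u, (χ 0 u : ℝ) * (P^t) u w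
        + ∑ r ∈ range N, ∑ u, Ef P σ X u (N-r) * (P^r) u w := by
    intro N
    induction N with
    | zero =>
        intro w
        rw [hXsucc 0 w, hX0 w]
        simp only [Finset.range_one, Finset.sum_singleton, Finset.range_zero,
          Finset.sum_empty, pow_zero, add_zero, zero_add]
        rw [sum_mul_one_apply]
    | succ N ih =>
        intro w
        have hXs : ((X (N+2) w : ℕ) : ℝ) = ((X (N+1) w : ℕ) : ℝ) + (χ (N+1) w : ℝ) := by
          rw [hXsucc (N+1) w]; push_cast; ring
        rw [hXs, ih w, L1 N w]
        have hmerge : ∑ r ∈ range (N+1), ∑ u, Ef P σ X u (N+1-r) * (P^r) u w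
            = ∑ r ∈ range N, ∑ u, Ef P σ X u (N-r) * (P^r) u w
              + ∑ r ∈ range (N+1), ∑ u,
                  (Ef P σ X u (N-r+1) - Ef P σ X u (N-r)) * (P^r) u w := by
          have hzero_term : ∑ u, Ef P σ X u (N-N) * (P^N) u w = 0 := by
            rw [Nat.sub_self]
            apply Finset.sum_eq_zero; intro u _
            rw [hEf0 u, zero_mul]
          have hext : ∑ r ∈ range N, ∑ u, Ef P σ X u (N-r) * (P^r) u w
              = ∑ r ∈ range (N+1), ∑ u, Ef P σ X u (N-r) * (P^r) u w := by
            rw [Finset.sum_range_succ, hzero_term, add_zero]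
          rw [hext, ← Finset.sum_add_distrib]
          apply Finset.sum_congr rfl; intro r hr
          rw [← Finset.sum_add_distrib]
          apply Finset.sum_congr rfl; intro u _
          have e1 : N+1-r = N-r+1 := by
            have := Finset.mem_range.mp hr; omega
          rw [e1]; ring
        have hsumT : ∑ t ∈ range (N+2), ∑ u, (χ 0 u : ℝ) * (P^t) u w
            = ∑ t ∈ range (N+1), ∑ u, (χ 0 u : ℝ) * (P^t) u w
              + ∑ u, (χ 0 u : ℝ) * (P^(N+1)) u w := Finset.sum_range_succ _ _
        rw [hmerge, hsumT]
        ring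
  -- token conservation
  have hcons : ∀ t, ∑ v, χ t v = k := by
    intro t
    induction t with
    | zero => exact hk
    | succ n ih =>
        calc ∑ u, χ (n+1) u = ∑ u, ∑ v, Z n v u :=
              Finset.sum_congr rfl fun u _ => hrec n u
          _ = ∑ v, ∑ u, Z n v u := Finset.sum_comm
          _ = ∑ v, χ n v := by
              apply Finset.sum_congr rfl; intro v _
              rw [Finset.sum_congr rfl fun u (_ : u ∈ univ) => hZ n v u]
              have h := Finset.card_eq_sum_card_fiberwise
                (f := fun j => σ v (X n v + j)) (s := range (χ n v))
                (t := (univ : Finset V)) (fun x _ => Finset.mem_univ _)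
              rw [Finset.card_range] at h
              exact h.symm
          _ = k := ih
  -- discrepancy bound per power
  have habs_r : ∀ (w : V) (K r : ℕ),
      |∑ u, Ef P σ X u K * (P^r) u w| ≤ M * π w * fbv P π w r := by
    intro w K r
    have hcenter : ∑ u, Ef P σ X u K * (P^r) u w
        = ∑ u, Ef P σ X u K * ((P^r) u w - π w) := by
      have hexp : ∑ u, Ef P σ X u K * ((P^r) u w - π w)
          = ∑ u, Ef P σ X u K * (P^r) u w - (∑ u, Ef P σ X u K) * π w := by
        rw [Finset.sum_mul, ← Finset.sum_sub_distrib]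
        apply Finset.sum_congr rfl; intro u _; ring
      rw [hexp, Ef_sum_zero P σ X hP1 K, zero_mul, sub_zero]
    rw [hcenter]
    have hper : ∀ u : V, |Ef P σ X u K * ((P^r) u w - π w)|
        ≤ M * (π w * |(P^r) w u - π u|) := by
      intro u
      rw [abs_mul]
      have h1 : |Ef P σ X u K| ≤ ((univ.filter fun x => 0 < P u x).card : ℝ) := by
        rw [← hdeg_eq u]
        exact Ef_abs_le P σ X hP0 hσ u K
      have hid : π u * ((P^r) u w - π w) = π w * ((P^r) w u - π u) := by
        have := srt_pow_rev P π hrev r u w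
        ring_nf
        linarith [this]
      have habseq : π u * |(P^r) u w - π w| = π w * |(P^r) w u - π u| := by
        have := congrArg abs hid
        rw [abs_mul, abs_mul, abs_of_pos (hπpos u), abs_of_pos (hπpos w)] at this
        exact this
      have h2 : |(P^r) u w - π w| = π w * |(P^r) w u - π u| / π u := by
        rw [eq_div_iff (ne_of_gt (hπpos u))]
        linarith [habseq]
      have hfactor : (0:ℝ) ≤ π w * |(P^r) w u - π u| / π u :=
        div_nonneg (mul_nonneg (le_of_lt (hπpos w)) (abs_nonneg _)) (le_of_lt (hπpos u))
      rw [h2]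
      calc |Ef P σ X u K| * (π w * |(P^r) w u - π u| / π u)
          ≤ ((univ.filter fun x => 0 < P u x).card : ℝ)
            * (π w * |(P^r) w u - π u| / π u) := by
            exact mul_le_mul_of_nonneg_right h1 hfactor
        _ = (((univ.filter fun x => 0 < P u x).card : ℝ) / π u)
            * (π w * |(P^r) w u - π u|) := by ring
        _ ≤ M * (π w * |(P^r) w u - π u|) := by
            exact mul_le_mul_of_nonneg_right (hMle u)
              (mul_nonneg (le_of_lt (hπpos w)) (abs_nonneg _))
    calc |∑ u, Ef P σ X u K * ((P^r) u w - π w)|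
        ≤ ∑ u, |Ef P σ X u K * ((P^r) u w - π w)| := Finset.abs_sum_le_sum_abs _ _
      _ ≤ ∑ u, M * (π w * |(P^r) w u - π u|) := Finset.sum_le_sum fun u _ => hper u
      _ = M * π w * fbv P π w r := by
          unfold fbv
          rw [← Finset.mul_sum]
          rw [← Finset.mul_sum]
          ring
  have hdisc : ∀ (w : V) (N : ℕ),
      |∑ r ∈ range N, ∑ u, Ef P σ X u (N-r) * (P^r) u w| ≤ 3 * (M * π w) * tstar := by
    intro w N
    calc |∑ r ∈ range N, ∑ u, Ef P σ X u (N-r) * (P^r) u w|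
        ≤ ∑ r ∈ range N, |∑ u, Ef P σ X u (N-r) * (P^r) u w| :=
          Finset.abs_sum_le_sum_abs _ _
      _ ≤ ∑ r ∈ range N, M * π w * fbv P π w r :=
          Finset.sum_le_sum fun r _ => habs_r w (N-r) r
      _ = M * π w * ∑ r ∈ range N, fbv P π w r := by rw [Finset.mul_sum]
      _ ≤ M * π w * (3 * tstar) := by
          apply mul_le_mul_of_nonneg_left (sumf P π hP0 hP1 hπpos hπ1 hstat tstar hq w N)
          exact mul_nonneg hM0 (le_of_lt (hπpos w))
      _ = 3 * (M * π w) * tstar := by ring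
  -- choose the covering time
  have hk0 : (0:ℝ) < (k:ℝ) := by exact_mod_cast hk1
  set L : ℕ := ⌊12 * M * (tstar:ℝ) / (k:ℝ)⌋₊ with hL
  have hklarge : 12 * M * (tstar:ℝ) < (k:ℝ) * ((L:ℝ) + 1) := by
    have hfl := Nat.lt_floor_add_one (12 * M * (tstar:ℝ) / (k:ℝ))
    rw [div_lt_iff₀ hk0] at hfl
    rw [← hL] at hfl
    linarith [hfl]
  have hcov : ∀ w, 1 ≤ X (2*tstar + L + 1) w := by
    intro w
    have hXval := CID (2*tstar + L) w
    have hmain : ((L:ℝ) + 1) * (k:ℝ) * π w / 4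
        ≤ ∑ t ∈ range (2*tstar + L + 1), ∑ u, (χ 0 u : ℝ) * (P^t) u w := by
      have hterm : ∀ t ∈ Finset.Ico (2*tstar) (2*tstar + L + 1),
          (k:ℝ) * (π w / 4) ≤ ∑ u, (χ 0 u : ℝ) * (P^t) u w := by
        intro t htmem
        have ht2 : 2*tstar ≤ t := (Finset.mem_Ico.mp htmem).1
        have hlow := pow_lower P π hP0 hP1 hπpos hπ1 hrev tstar hq
        have hcast : ∑ u, ((χ 0 u : ℕ):ℝ) = (k:ℝ) := by
          rw [← Nat.cast_sum, hk]
        calc (k:ℝ) * (π w / 4) = ∑ u, ((χ 0 u : ℕ):ℝ) * (π w / 4) := by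
              rw [← Finset.sum_mul, hcast]
          _ ≤ ∑ u, (χ 0 u : ℝ) * (P^t) u w := by
              apply Finset.sum_le_sum; intro u _
              apply mul_le_mul_of_nonneg_left _ (Nat.cast_nonneg _)
              have := hlow u w t ht2
              linarith [this]
      have hsub : Finset.Ico (2*tstar) (2*tstar + L + 1) ⊆ range (2*tstar + L + 1) := by
        intro x hx
        rw [Finset.mem_range]
        exact (Finset.mem_Ico.mp hx).2
      have hnneg : ∀ t ∈ range (2*tstar + L + 1),
          (0:ℝ) ≤ ∑ u, (χ 0 u : ℝ) * (P^t) u w := by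
        intro t _
        apply Finset.sum_nonneg; intro u _
        exact mul_nonneg (Nat.cast_nonneg _) (srt_pow_nonneg P hP0 t u w)
      have hcard : (Finset.Ico (2*tstar) (2*tstar + L + 1)).card = L + 1 := by
        rw [Nat.card_Ico]; omega
      calc ((L:ℝ) + 1) * (k:ℝ) * π w / 4
          = ∑ _t ∈ Finset.Ico (2*tstar) (2*tstar + L + 1), (k:ℝ) * (π w / 4) := by
            rw [Finset.sum_const, hcard]
            push_cast
            ring
        _ ≤ ∑ t ∈ Finset.Ico (2*tstar) (2*tstar + L + 1), ∑ u, (χ 0 u : ℝ) * (P^t) u w :=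
            Finset.sum_le_sum hterm
        _ ≤ ∑ t ∈ range (2*tstar + L + 1), ∑ u, (χ 0 u : ℝ) * (P^t) u w :=
            Finset.sum_le_sum_of_subset_of_nonneg hsub (fun t ht _ => hnneg t ht)
    have hdiscN := hdisc w (2*tstar + L)
    have hpos : (0:ℝ) < ((X (2*tstar + L + 1) w : ℕ) : ℝ) := by
      have harr : 2*tstar + L + 1 = (2*tstar + L) + 1 := rfl
      rw [harr, hXval]
      have hRlow : -(3 * (M * π w) * tstar)
          ≤ ∑ r ∈ range (2*tstar + L), ∑ u, Ef P σ X u (2*tstar + L - r) * (P^r) u w := by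
        have := neg_abs_le (∑ r ∈ range (2*tstar + L), ∑ u,
          Ef P σ X u (2*tstar + L - r) * (P^r) u w)
        linarith [hdiscN]
      have hgap : 3 * (M * π w) * (tstar:ℝ) < ((L:ℝ) + 1) * (k:ℝ) * π w / 4 := by
        have hw := hπpos w
        nlinarith [hklarge, hw]
      linarith [hmain, hRlow, hgap]
    have : 0 < X (2*tstar + L + 1) w := by exact_mod_cast hpos
    omega
  have hTle : Tcover ≤ 2*tstar + L + 1 := by
    rw [hTc]
    exact Nat.sInf_le hcov
  have hLreal : (L:ℝ) ≤ 12 * M * (tstar:ℝ) / (k:ℝ) := by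
    rw [hL]
    apply Nat.floor_le
    apply div_nonneg _ (le_of_lt hk0)
    positivity
  calc (Tcover : ℝ) ≤ ((2*tstar + L + 1 : ℕ) : ℝ) := by exact_mod_cast hTle
    _ = 2 * (tstar:ℝ) + (L:ℝ) + 1 := by push_cast; ring
    _ ≤ 2 * (tstar:ℝ) + 1 + 12 * M * (tstar:ℝ) / (k:ℝ) := by linarith [hLreal]
end
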